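/- arXiv:2102.01743 — 5 statements merged into one kernel-verified Lean document; each statement's English description precedes it below -/
import Mathlib

section
/- Let $(a_n)_{n\geq 1}$ and $(b_n)_{n\geq 1}$ be decreasing sequences of nonnegative reals tending to $0$, and suppose there exists $\gamma \in (0,1)$ such that $(n^{\gamma} b_n)_n$ is increasing. If there exists $B > 0$ such that for every increasing convex function $h: [0,\infty) \to [0,\infty)$ with $h(0)=0$ we have $\sum_{n\geq 1} h(b_n/B) \leq \sum_{n\geq 1} h(a_n) \leq \sum_{n\geq 1} h(B b_n)$, then there exist constants $c, C > 0$ such that $c\, b_n \leq a_n \leq C\, b_n$ for all $n$. -/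
/-!
Test the hypothesis on the hinge functions `x ↦ (x - t)⁺`. The growth condition on `n ^ γ * b n`
gives `b k ≤ (n / k) ^ γ * b n` for `k ≤ n`, hence `∑_{k ≤ n} b k ≤ n * b n / (1 - γ)`, and
`b k ≥ M ^ (-γ) * b n` for `n ≤ k ≤ M * n`.

With `t = B * b n`, each of `a 1, …, a n` exceeds `a n`, so
`n * (a n - B * b n) ≤ ∑_{k ≤ n} B * b k ≤ B * n * b n / (1 - γ)`: this is the upper bound.
With `t = a n`, the `(M - 1) * n` terms `b k / B` with `n < k ≤ M * n` give
`(M - 1) * n * (M ^ (-γ) * b n / B - a n) ≤ ∑_{k ≤ n} a k ≲ n * b n`, and since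
`(M - 1) * M ^ (-γ) → ∞` (because `γ < 1`), a large fixed `M` yields the lower bound.
-/

open Filter Topology
open scoped ENNReal

theorem rpow_one_sub_add_mul_rpow_neg_le {γ : ℝ} (hγ0 : 0 ≤ γ) (hγ1 : γ ≤ 1) {x : ℝ} (hx : 0 ≤ x) :
    x ^ (1 - γ) + (1 - γ) * (x + 1) ^ (-γ) ≤ (x + 1) ^ (1 - γ) := by
  have hx1 : 0 < x + 1 := by linarith
  have amgm : x ^ (1 - γ) * (x + 1) ^ γ ≤ x + γ := by
    have := Real.geom_mean_le_arith_mean2_weighted (sub_nonneg.2 hγ1) hγ0 hx hx1.le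
      (sub_add_cancel 1 γ)
    linarith
  have hcancel : (x + 1) ^ γ * (x + 1) ^ (-γ) = 1 := by
    rw [← Real.rpow_add hx1, add_neg_cancel, Real.rpow_zero]
  have hsplit : (x + 1) ^ (1 - γ) = (x + 1) * (x + 1) ^ (-γ) := by
    rw [sub_eq_add_neg, Real.rpow_add hx1, Real.rpow_one]
  have := mul_le_mul_of_nonneg_right amgm (Real.rpow_nonneg hx1.le (-γ))
  rw [mul_assoc, hcancel, mul_one] at this
  rw [hsplit]
  linarith

theorem sum_rpow_neg_le {γ : ℝ} (hγ0 : 0 ≤ γ) (hγ1 : γ < 1) (n : ℕ) :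
    ∑ k ∈ Finset.range n, ((k : ℝ) + 1) ^ (-γ) ≤ (1 - γ)⁻¹ * (n : ℝ) ^ (1 - γ) := by
  rw [le_inv_mul_iff₀ (sub_pos.2 hγ1)]
  induction n with
  | zero => simp [Real.zero_rpow (sub_ne_zero.2 hγ1.ne')]
  | succ n ih =>
    have := rpow_one_sub_add_mul_rpow_neg_le hγ0 hγ1.le (Nat.cast_nonneg n)
    rw [Finset.sum_range_succ, mul_add]
    push_cast
    linarith

section RegularVariation

variable {b : ℕ → ℝ} {γ : ℝ}
  (hreg : ∀ m n : ℕ, 1 ≤ m → m ≤ n → (m : ℝ) ^ γ * b m ≤ (n : ℝ) ^ γ * b n)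
include hreg

theorem le_rpow_div_mul_of_rpow_mul_mono {m n : ℕ} (hm : 1 ≤ m) (hmn : m ≤ n) :
    b m ≤ ((n : ℝ) / m) ^ γ * b n := by
  have hm0 : (0 : ℝ) < m := by exact_mod_cast hm
  rw [Real.div_rpow (Nat.cast_nonneg n) hm0.le, div_mul_eq_mul_div,
    le_div_iff₀ (Real.rpow_pos_of_pos hm0 γ), mul_comm]
  exact hreg m n hm hmn

theorem sum_le_of_rpow_mul_mono (hγ0 : 0 ≤ γ) (hγ1 : γ < 1) (hb : ∀ n, 0 ≤ b n) (n : ℕ) :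
    ∑ k ∈ Finset.range n, b (k + 1) ≤ (1 - γ)⁻¹ * (n * b n) := by
  have hterm : ∀ k ∈ Finset.range n, b (k + 1) ≤ (n : ℝ) ^ γ * b n * ((k : ℝ) + 1) ^ (-γ) := by
    intro k hk
    have := le_rpow_div_mul_of_rpow_mul_mono hreg (Nat.le_add_left 1 k) (Finset.mem_range.1 hk)
    rwa [Real.div_rpow (Nat.cast_nonneg n) (by positivity), Nat.cast_add_one, div_eq_mul_inv,
      ← Real.rpow_neg (by positivity), mul_right_comm] at this
  calc ∑ k ∈ Finset.range n, b (k + 1)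
      ≤ (n : ℝ) ^ γ * b n * ∑ k ∈ Finset.range n, ((k : ℝ) + 1) ^ (-γ) := by
        rw [Finset.mul_sum]; exact Finset.sum_le_sum hterm
    _ ≤ (n : ℝ) ^ γ * b n * ((1 - γ)⁻¹ * (n : ℝ) ^ (1 - γ)) := by
        gcongr
        · exact mul_nonneg (by positivity) (hb n)
        · exact sum_rpow_neg_le hγ0 hγ1 n
    _ = (1 - γ)⁻¹ * (n * b n) := by
        have : (n : ℝ) ^ γ * (n : ℝ) ^ (1 - γ) = n := by
          rw [← Real.rpow_add' (Nat.cast_nonneg n) (by norm_num), add_sub_cancel, Real.rpow_one]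
        linear_combination (1 - γ)⁻¹ * b n * this

theorem rpow_neg_mul_le_of_rpow_mul_mono (hγ0 : 0 ≤ γ) (hb : ∀ n, 0 ≤ b n) {M n k : ℕ}
    (hn : 1 ≤ n) (hnk : n ≤ k) (hkM : k ≤ M * n) : (M : ℝ) ^ (-γ) * b n ≤ b k := by
  have hn0 : (0 : ℝ) < n := by exact_mod_cast hn
  have hM0 : (0 : ℝ) < M := by
    have : 0 < M := Nat.pos_of_mul_pos_right (by omega : 0 < M * n)
    exact_mod_cast this
  have hkn : (k : ℝ) / n ≤ M := by
    rw [div_le_iff₀ hn0]; exact_mod_cast hkM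
  calc (M : ℝ) ^ (-γ) * b n
      ≤ (M : ℝ) ^ (-γ) * (((k : ℝ) / n) ^ γ * b k) := by
        gcongr; exact le_rpow_div_mul_of_rpow_mul_mono hreg hn hnk
    _ ≤ (M : ℝ) ^ (-γ) * ((M : ℝ) ^ γ * b k) := by
        gcongr
        exact hb k
    _ = b k := by
        rw [← mul_assoc, ← Real.rpow_add hM0, neg_add_cancel, Real.rpow_zero, one_mul]

end RegularVariation

theorem exists_nat_lt_sub_one_mul_rpow_neg {γ : ℝ} (hγ1 : γ < 1) (X : ℝ) :
    ∃ M : ℕ, 2 ≤ M ∧ X < ((M : ℝ) - 1) * (M : ℝ) ^ (-γ) := by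
  obtain ⟨M, hM2, hMX⟩ := ((eventually_ge_atTop 2).and
    (((tendsto_rpow_atTop (sub_pos.2 hγ1)).comp tendsto_natCast_atTop_atTop).eventually_gt_atTop
      (2 * X))).exists
  have hM0 : (0 : ℝ) < M := by positivity
  have hsplit : (M : ℝ) ^ (1 - γ) = M * (M : ℝ) ^ (-γ) := by
    rw [sub_eq_add_neg, Real.rpow_add hM0, Real.rpow_one]
  have hM2' : (2 : ℝ) ≤ M := by exact_mod_cast hM2
  refine ⟨M, hM2, ?_⟩
  simp only [Function.comp_apply, hsplit] at hMX
  nlinarith [Real.rpow_pos_of_pos hM0 (-γ)]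

noncomputable def hingeSum (x : ℕ → ℝ) (t : ℝ) : ℝ≥0∞ :=
  ∑' k : ℕ, ENNReal.ofReal (max (x (k + 1) - t) 0)

theorem hingeSum_le_of_forall_convexOn {x y : ℕ → ℝ}
    (h : ∀ φ : ℝ → ℝ, MonotoneOn φ (Set.Ici 0) → ConvexOn ℝ (Set.Ici 0) φ → φ 0 = 0 →
      ∑' n : ℕ, ENNReal.ofReal (φ (x (n + 1))) ≤ ∑' n : ℕ, ENNReal.ofReal (φ (y (n + 1))))
    {t : ℝ} (ht : 0 ≤ t) : hingeSum x t ≤ hingeSum y t :=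
  h (fun u ↦ max (u - t) 0) (fun _ _ _ _ huv ↦ max_le_max (by linarith) le_rfl)
    (((convexOn_id (convex_Ici 0)).sub (concaveOn_const t (convex_Ici 0))).sup
      (convexOn_const 0 (convex_Ici 0)))
    (max_eq_right (by linarith))

theorem ofReal_card_mul_sub_le_hingeSum {x : ℕ → ℝ} (s : Finset ℕ) {v t : ℝ}
    (hv : ∀ k ∈ s, v ≤ x (k + 1)) : ENNReal.ofReal (s.card * (v - t)) ≤ hingeSum x t :=
  calc ENNReal.ofReal (s.card * (v - t))
      = ∑ _k ∈ s, ENNReal.ofReal (v - t) := by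
        rw [ENNReal.ofReal_mul (Nat.cast_nonneg _), ENNReal.ofReal_natCast, Finset.sum_const,
          nsmul_eq_mul]
    _ ≤ ∑ k ∈ s, ENNReal.ofReal (max (x (k + 1) - t) 0) :=
        Finset.sum_le_sum fun k hk ↦ ENNReal.ofReal_le_ofReal <|
          le_max_of_le_left (by linarith [hv k hk])
    _ ≤ hingeSum x t := ENNReal.sum_le_tsum s

theorem hingeSum_le_ofReal_sum {y : ℕ → ℝ} {t : ℝ} (ht : 0 ≤ t) {n : ℕ}
    (hy : ∀ k < n, 0 ≤ y (k + 1)) (htail : ∀ k, n ≤ k → y (k + 1) ≤ t) :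
    hingeSum y t ≤ ENNReal.ofReal (∑ k ∈ Finset.range n, y (k + 1)) := by
  have hfin : hingeSum y t = ∑ k ∈ Finset.range n, ENNReal.ofReal (max (y (k + 1) - t) 0) := by
    refine tsum_eq_sum fun k hk ↦ ?_
    rw [max_eq_right (by linarith [htail k (by simpa using hk)]), ENNReal.ofReal_zero]
  rw [hfin, ENNReal.ofReal_sum_of_nonneg fun k hk ↦ hy k (Finset.mem_range.1 hk)]
  exact Finset.sum_le_sum fun k hk ↦ ENNReal.ofReal_le_ofReal <|
    max_le (by linarith) (hy k (Finset.mem_range.1 hk))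

theorem card_mul_sub_le_sum_of_hingeSum_le {x y : ℕ → ℝ} {t : ℝ} (ht : 0 ≤ t) {n : ℕ}
    (hy : ∀ k < n, 0 ≤ y (k + 1)) (htail : ∀ k, n ≤ k → y (k + 1) ≤ t)
    (h : hingeSum x t ≤ hingeSum y t) (s : Finset ℕ) {v : ℝ} (hv : ∀ k ∈ s, v ≤ x (k + 1)) :
    s.card * (v - t) ≤ ∑ k ∈ Finset.range n, y (k + 1) := by
  refine (ENNReal.ofReal_le_ofReal_iff <| Finset.sum_nonneg fun k hk ↦
    hy k (Finset.mem_range.1 hk)).1 ?_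
  exact (ofReal_card_mul_sub_le_hingeSum s hv).trans (h.trans (hingeSum_le_ofReal_sum ht hy htail))

section Comparison

variable {a b : ℕ → ℝ} (ha_dec : ∀ m n, 1 ≤ m → m ≤ n → a n ≤ a m)
include ha_dec

theorem le_mul_of_hingeSum_le {B K : ℝ} (hB : 0 < B) (hb_nonneg : ∀ n, 0 ≤ b n)
    (hb_dec : ∀ m n, 1 ≤ m → m ≤ n → b n ≤ b m)
    (hbsum : ∀ n, ∑ k ∈ Finset.range n, b (k + 1) ≤ K * (n * b n))
    (hmaj : ∀ t, 0 ≤ t → hingeSum a t ≤ hingeSum (fun k ↦ B * b k) t) {n : ℕ} (hn : 1 ≤ n) :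
    a n ≤ B * (1 + K) * b n := by
  have hn0 : (0 : ℝ) < n := by exact_mod_cast hn
  have key := card_mul_sub_le_sum_of_hingeSum_le (x := a) (y := fun k ↦ B * b k) (n := n)
    (mul_nonneg hB.le (hb_nonneg n)) (fun k _ ↦ mul_nonneg hB.le (hb_nonneg _))
    (fun k hk ↦ mul_le_mul_of_nonneg_left (hb_dec n (k + 1) hn (by omega)) hB.le)
    (hmaj _ (mul_nonneg hB.le (hb_nonneg n))) (Finset.range n) (v := a n)
    (fun k hk ↦ ha_dec (k + 1) n (by omega) (Finset.mem_range.1 hk))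
  rw [Finset.card_range, ← Finset.mul_sum] at key
  have : (n : ℝ) * (a n - B * b n) ≤ n * (B * K * b n) := by
    linarith [mul_le_mul_of_nonneg_left (hbsum n) hB.le]
  linarith [le_of_mul_le_mul_left this hn0]

theorem mul_le_of_hingeSum_le {B C K μ : ℝ} {M : ℕ} (hB : 0 < B) (hM : 2 ≤ M)
    (ha_nonneg : ∀ n, 0 ≤ a n) (hC : 0 ≤ C) (hupper : ∀ n, 1 ≤ n → a n ≤ C * b n)
    (hbsum : ∀ n, ∑ k ∈ Finset.range n, b (k + 1) ≤ K * (n * b n))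
    (hspread : ∀ n k, 1 ≤ n → n ≤ k → k ≤ M * n → μ * b n ≤ b k)
    (hmaj : ∀ t, 0 ≤ t → hingeSum (fun k ↦ b k / B) t ≤ hingeSum a t) {n : ℕ} (hn : 1 ≤ n) :
    (μ / B - C * K / (M - 1)) * b n ≤ a n := by
  have hn0 : (0 : ℝ) < n := by exact_mod_cast hn
  have hM1 : (0 : ℝ) < M - 1 := by
    have : (2 : ℝ) ≤ M := by exact_mod_cast hM
    linarith
  have hasum : ∑ k ∈ Finset.range n, a (k + 1) ≤ C * (K * (n * b n)) :=
    calc ∑ k ∈ Finset.range n, a (k + 1) ≤ ∑ k ∈ Finset.range n, C * b (k + 1) :=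
          Finset.sum_le_sum fun k _ ↦ hupper (k + 1) (Nat.le_add_left 1 k)
      _ ≤ C * (K * (n * b n)) := by
          rw [← Finset.mul_sum]; exact mul_le_mul_of_nonneg_left (hbsum n) hC
  have key := card_mul_sub_le_sum_of_hingeSum_le (x := fun k ↦ b k / B) (y := a) (n := n)
    (ha_nonneg n) (fun k _ ↦ ha_nonneg _) (fun k hk ↦ ha_dec n (k + 1) hn (by omega))
    (hmaj _ (ha_nonneg n)) (Finset.Ico n (M * n)) (v := μ * b n / B) fun k hk ↦ by
      obtain ⟨hnk, hkM⟩ := Finset.mem_Ico.1 hk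
      exact div_le_div_of_nonneg_right (hspread n (k + 1) hn (by omega) hkM) hB.le
  have hcard : ((Finset.Ico n (M * n)).card : ℝ) = n * (M - 1) := by
    rw [Nat.card_Ico, Nat.cast_sub (Nat.le_mul_of_pos_left n (by omega))]
    push_cast
    ring
  rw [hcard] at key
  have : (M - 1) * (μ * b n / B - a n) ≤ C * K * b n := by
    refine le_of_mul_le_mul_left ?_ hn0
    linarith
  rw [sub_mul, div_mul_eq_mul_div, div_mul_eq_mul_div, sub_le_iff_le_add, ← sub_le_iff_le_add',
    le_div_iff₀ hM1]
  linarith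

end Comparison

theorem stmt0_general (a b : ℕ → ℝ)
    (ha_nonneg : ∀ n, 0 ≤ a n) (hb_nonneg : ∀ n, 0 ≤ b n)
    (ha_dec : ∀ m n, 1 ≤ m → m ≤ n → a n ≤ a m)
    (hb_dec : ∀ m n, 1 ≤ m → m ≤ n → b n ≤ b m)
    (hγ : ∃ γ ∈ Set.Ioo (0:ℝ) 1,
      ∀ m n : ℕ, 1 ≤ m → m ≤ n → (m : ℝ) ^ γ * b m ≤ (n : ℝ) ^ γ * b n)
    (hB : ∃ B > (0:ℝ), ∀ h : ℝ → ℝ, MonotoneOn h (Set.Ici 0) →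
      ConvexOn ℝ (Set.Ici 0) h → h 0 = 0 →
      (∑' n : ℕ, ENNReal.ofReal (h (b (n+1) / B)) ≤ ∑' n : ℕ, ENNReal.ofReal (h (a (n+1)))) ∧
      (∑' n : ℕ, ENNReal.ofReal (h (a (n+1))) ≤ ∑' n : ℕ, ENNReal.ofReal (h (B * b (n+1))))) :
    ∃ c > (0:ℝ), ∃ C > (0:ℝ), ∀ n : ℕ, 1 ≤ n → c * b n ≤ a n ∧ a n ≤ C * b n := by
  obtain ⟨γ, ⟨hγ0, hγ1⟩, hreg⟩ := hγ
  obtain ⟨B, hB0, hmaj⟩ := hB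
  set K := (1 - γ)⁻¹
  set C := B * (1 + K)
  have hC : 0 < C := by positivity
  have hbsum := sum_le_of_rpow_mul_mono hreg hγ0.le hγ1 hb_nonneg
  have hupper : ∀ n, 1 ≤ n → a n ≤ C * b n := fun n ↦
    le_mul_of_hingeSum_le ha_dec hB0 hb_nonneg hb_dec hbsum
      (fun t ↦ hingeSum_le_of_forall_convexOn fun φ h₁ h₂ h₀ ↦ (hmaj φ h₁ h₂ h₀).2)
  obtain ⟨M, hM, hMX⟩ := exists_nat_lt_sub_one_mul_rpow_neg hγ1 (B * (C * K))
  set c := (M : ℝ) ^ (-γ) / B - C * K / (M - 1)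
  have hc : 0 < c := by
    have hM1 : (0 : ℝ) < M - 1 := by
      have : (2 : ℝ) ≤ M := by exact_mod_cast hM
      linarith
    rw [sub_pos, div_lt_div_iff₀ hM1 hB0]
    linarith
  have hlower : ∀ n, 1 ≤ n → c * b n ≤ a n := fun n ↦
    mul_le_of_hingeSum_le ha_dec hB0 hM ha_nonneg hC.le hupper hbsum
      (fun _ _ ↦ rpow_neg_mul_le_of_rpow_mul_mono hreg hγ0.le hb_nonneg)
      (fun t ↦ hingeSum_le_of_forall_convexOn (x := fun k ↦ b k / B)
        fun φ h₁ h₂ h₀ ↦ (hmaj φ h₁ h₂ h₀).1)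
  exact ⟨c, hc, C, hC, fun n hn ↦ ⟨hlower n hn, hupper n hn⟩⟩

/-- comparison of decreasing sequences via sums of convex functions. -/
theorem stmt0 (a b : ℕ → ℝ)
    (ha_nonneg : ∀ n, 0 ≤ a n) (hb_nonneg : ∀ n, 0 ≤ b n)
    (ha_dec : ∀ m n, 1 ≤ m → m ≤ n → a n ≤ a m)
    (hb_dec : ∀ m n, 1 ≤ m → m ≤ n → b n ≤ b m)
    (ha_lim : Tendsto a atTop (𝓝 0)) (hb_lim : Tendsto b atTop (𝓝 0))
    (hγ : ∃ γ ∈ Set.Ioo (0:ℝ) 1,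
      ∀ m n : ℕ, 1 ≤ m → m ≤ n → (m : ℝ) ^ γ * b m ≤ (n : ℝ) ^ γ * b n)
    (hB : ∃ B > (0:ℝ), ∀ h : ℝ → ℝ, MonotoneOn h (Set.Ici 0) →
      ConvexOn ℝ (Set.Ici 0) h → h 0 = 0 →
      (∑' n : ℕ, ENNReal.ofReal (h (b (n+1) / B)) ≤ ∑' n : ℕ, ENNReal.ofReal (h (a (n+1)))) ∧
      (∑' n : ℕ, ENNReal.ofReal (h (a (n+1))) ≤ ∑' n : ℕ, ENNReal.ofReal (h (B * b (n+1))))) :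
    ∃ c > (0:ℝ), ∃ C > (0:ℝ), ∀ n : ℕ, 1 ≤ n → c * b n ≤ a n ∧ a n ≤ C * b n :=
  stmt0_general a b ha_nonneg hb_nonneg ha_dec hb_dec hγ hB
end

section
/- Let $0 < A < p$ be real numbers, let $\rho : (0,\infty) \to (0,\infty)$ be increasing with $\rho(x)/x^A$ decreasing, and let $(a_n)_{n\geq 1}$ be a decreasing sequence of nonnegative reals. Suppose that for every increasing function $h : [0,\infty) \to [0,\infty)$ with $h(0)=0$ such that $t \mapsto h(t^p)$ is convex, we have $\sum_{n\geq 1} h(a_n) \leq \sum_{n\geq 1} h(1/\rho(n))$. Then there exists a constant $C$ depending only on $p$ and $A$ such that $a_n \leq C/\rho(n)$ for all $n \geq 1$. -/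
/-!
Fix `n ≥ 1`, put `δ = ρ(n)^{-1/p}` and test against `h(t) = (t^{1/p} - δ)⁺`, for which
`h(t^p) = (t - δ)⁺` is convex. Since `a` decreases, the left sum is at least `n h(aₙ)`. On the
right, the terms with `m ≥ n` vanish because `ρ` increases, while for `m ≤ n` the decrease of
`ρ(x)/x^A` gives `h(1/ρ(m)) ≤ δ (n/m)^{A/p}`; as `A/p < 1`, these add up to at most
`δ n / (1 - A/p)`. Hence `aₙ^{1/p} ≤ (1 + 1/(1 - A/p)) δ`, that is `aₙ ≤ C/ρ(n)` with
`C = (1 + 1/(1 - A/p))^p`.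
-/

open scoped ENNReal

/-- The tangent-line bound for the concave function `x ↦ x^β` at `x + 1`. -/
theorem mul_rpow_sub_one_le_rpow_sub_rpow {β x : ℝ} (hβ0 : 0 ≤ β) (hβ1 : β ≤ 1) (hx : 0 ≤ x) :
    β * (x + 1) ^ (β - 1) ≤ (x + 1) ^ β - x ^ β := by
  have hx1 : 0 < x + 1 := by linarith
  have hbernoulli : (x / (x + 1)) ^ β ≤ 1 - β / (x + 1) := by
    have hs : -1 ≤ -(x + 1)⁻¹ := neg_le_neg (inv_le_one_of_one_le₀ (by linarith))
    convert rpow_one_add_le_one_add_mul_self hs hβ0 hβ1 using 1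
    · congr 1; field_simp; ring
    · field_simp; ring
  have hsplit : (x + 1) ^ β = (x + 1) ^ (β - 1) * (x + 1) := by
    rw [← Real.rpow_add_one hx1.ne', sub_add_cancel]
  calc β * (x + 1) ^ (β - 1) = (x + 1) ^ β - (1 - β / (x + 1)) * (x + 1) ^ β := by
        rw [hsplit]; field_simp; ring
    _ ≤ (x + 1) ^ β - (x / (x + 1)) ^ β * (x + 1) ^ β := by gcongr
    _ = (x + 1) ^ β - x ^ β := by
        rw [Real.div_rpow hx hx1.le, div_mul_cancel₀ _ (by positivity)]

theorem sum_range_add_one_rpow_neg_le {α : ℝ} (hα0 : 0 ≤ α) (hα1 : α < 1) (n : ℕ) :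
    ∑ m ∈ Finset.range n, ((m : ℝ) + 1) ^ (-α) ≤ (n : ℝ) ^ (1 - α) / (1 - α) := by
  have h1α : 0 < 1 - α := by linarith
  induction n with
  | zero => simp [Real.zero_rpow h1α.ne']
  | succ n ih =>
    have step := mul_rpow_sub_one_le_rpow_sub_rpow h1α.le (by linarith) (Nat.cast_nonneg n)
    rw [sub_sub_cancel_left] at step
    rw [Finset.sum_range_succ, Nat.cast_succ]
    rw [le_div_iff₀ h1α] at ih ⊢
    linarith

theorem natCast_mul_le_tsum {f : ℕ → ℝ≥0∞} {c : ℝ≥0∞} {n : ℕ} (h : ∀ m < n, c ≤ f m) :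
    n * c ≤ ∑' m, f m :=
  calc (n : ℝ≥0∞) * c = ∑ _m ∈ Finset.range n, c := by simp
    _ ≤ ∑ m ∈ Finset.range n, f m := Finset.sum_le_sum fun m hm => h m (Finset.mem_range.1 hm)
    _ ≤ ∑' m, f m := ENNReal.sum_le_tsum _

theorem inv_le_rpow_div_mul_inv {A x y u v : ℝ} (hx : 0 < x) (hy : 0 < y) (hu : 0 < u)
    (hv : 0 < v) (h : v / y ^ A ≤ u / x ^ A) : u⁻¹ ≤ (y / x) ^ A * v⁻¹ := by
  have hxA : 0 < x ^ A := by positivity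
  have hyA : 0 < y ^ A := by positivity
  rw [div_le_div_iff₀ hyA hxA] at h
  rw [Real.div_rpow hy.le hx.le, div_mul_eq_mul_div, le_div_iff₀ hxA, inv_mul_le_iff₀ hu,
    ← mul_assoc, ← div_eq_mul_inv, le_div_iff₀ hv]
  linarith

noncomputable def truncRoot (p δ t : ℝ) : ℝ := max (t ^ p⁻¹ - δ) 0

section truncRoot

variable {p δ : ℝ}

theorem truncRoot_rpow (hp : p ≠ 0) {t : ℝ} (ht : 0 ≤ t) :
    truncRoot p δ (t ^ p) = max (t - δ) 0 := by
  rw [truncRoot, ← Real.rpow_mul ht, mul_inv_cancel₀ hp, Real.rpow_one]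

theorem truncRoot_zero (hp : p ≠ 0) (hδ : 0 ≤ δ) : truncRoot p δ 0 = 0 := by
  simp [truncRoot, Real.zero_rpow (inv_ne_zero hp), hδ]

theorem monotoneOn_truncRoot (hp : 0 < p) : MonotoneOn (truncRoot p δ) (Set.Ici 0) :=
  fun _ hx _ _ hxy =>
    max_le_max (sub_le_sub_right (Real.rpow_le_rpow hx hxy (inv_nonneg.2 hp.le)) δ) le_rfl

theorem convexOn_truncRoot_rpow (hp : p ≠ 0) :
    ConvexOn ℝ (Set.Ici 0) (fun t => truncRoot p δ (t ^ p)) := by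
  have : ConvexOn ℝ (Set.Ici 0) (fun t : ℝ => max (t - δ) 0) :=
    ((convexOn_id (convex_Ici 0)).sub (concaveOn_const δ (convex_Ici 0))).sup
      (convexOn_const 0 (convex_Ici 0))
  exact this.congr fun t ht => (truncRoot_rpow hp ht).symm

theorem truncRoot_le_rpow_inv (hδ : 0 ≤ δ) {t : ℝ} (ht : 0 ≤ t) : truncRoot p δ t ≤ t ^ p⁻¹ :=
  max_le (by linarith) (by positivity)

theorem truncRoot_eq_zero {t : ℝ} (h : t ^ p⁻¹ ≤ δ) : truncRoot p δ t = 0 :=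
  max_eq_right (by linarith)

theorem le_rpow_of_truncRoot_le (hp : 0 < p) {t c : ℝ} (ht : 0 ≤ t)
    (h : truncRoot p δ t ≤ c * δ) : t ≤ ((1 + c) * δ) ^ p := by
  have hroot : t ^ p⁻¹ ≤ (1 + c) * δ := by
    linarith [le_max_left (t ^ p⁻¹ - δ) 0, show max (t ^ p⁻¹ - δ) 0 ≤ c * δ from h]
  calc t = (t ^ p⁻¹) ^ p := by rw [← Real.rpow_mul ht, inv_mul_cancel₀ hp.ne', Real.rpow_one]
    _ ≤ ((1 + c) * δ) ^ p := Real.rpow_le_rpow (by positivity) hroot hp.le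

end truncRoot

theorem truncRoot_inv_le_of_div_rpow_le {p A x y u v : ℝ} (hp : 0 < p) (hx : 0 < x) (hy : 0 < y)
    (hu : 0 < u) (hv : 0 < v) (h : v / y ^ A ≤ u / x ^ A) :
    truncRoot p (v⁻¹ ^ p⁻¹) u⁻¹ ≤ v⁻¹ ^ p⁻¹ * (y / x) ^ (A / p) :=
  calc truncRoot p (v⁻¹ ^ p⁻¹) u⁻¹ ≤ u⁻¹ ^ p⁻¹ :=
        truncRoot_le_rpow_inv (by positivity) (by positivity)
    _ ≤ ((y / x) ^ A * v⁻¹) ^ p⁻¹ :=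
        Real.rpow_le_rpow (by positivity) (inv_le_rpow_div_mul_inv hx hy hu hv h) (by positivity)
    _ = v⁻¹ ^ p⁻¹ * (y / x) ^ (A / p) := by
        rw [Real.mul_rpow (by positivity) (by positivity), ← Real.rpow_mul (by positivity),
          div_eq_mul_inv A p, mul_comm]

theorem tsum_truncRoot_inv_le {p A : ℝ} {ρ : ℝ → ℝ} (hA : 0 ≤ A) (hAp : A < p)
    (hρpos : ∀ x : ℝ, 0 < x → 0 < ρ x) (hρmono : MonotoneOn ρ (Set.Ioi 0))
    (hρA : ∀ x y : ℝ, 0 < x → x ≤ y → ρ y / y ^ A ≤ ρ x / x ^ A) {n : ℕ} (hn : 1 ≤ n) :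
    ∑' m : ℕ, ENNReal.ofReal (truncRoot p ((ρ n)⁻¹ ^ p⁻¹) (ρ ((m : ℝ) + 1))⁻¹) ≤
      ENNReal.ofReal (n * (1 / (1 - A / p) * (ρ n)⁻¹ ^ p⁻¹)) := by
  have hp : 0 < p := hA.trans_lt hAp
  have hN : (0 : ℝ) < n := Nat.cast_pos.2 hn
  set δ := (ρ n)⁻¹ ^ p⁻¹
  have hδ : 0 ≤ δ := by have := hρpos n hN; positivity
  set α := A / p
  have hα0 : 0 ≤ α := by positivity
  have hα1 : α < 1 := (div_lt_one hp).2 hAp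
  have hvanish : ∀ m ∉ Finset.range n,
      ENNReal.ofReal (truncRoot p δ (ρ ((m : ℝ) + 1))⁻¹) = 0 := by
    intro m hm
    have hnm : (n : ℝ) ≤ m + 1 := by
      rw [Finset.mem_range, not_lt] at hm
      exact_mod_cast hm.trans m.le_succ
    have hρm := hρpos (m + 1) (by positivity)
    rw [truncRoot_eq_zero, ENNReal.ofReal_zero]
    exact Real.rpow_le_rpow (by positivity)
      (inv_anti₀ (hρpos n hN) (hρmono hN (Set.mem_Ioi.2 (by positivity)) hnm)) (by positivity)
  have hterm : ∀ m ∈ Finset.range n,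
      truncRoot p δ (ρ ((m : ℝ) + 1))⁻¹ ≤ δ * n ^ α * ((m : ℝ) + 1) ^ (-α) := by
    intro m hm
    have hmn : (m : ℝ) + 1 ≤ n := by exact_mod_cast Finset.mem_range.1 hm
    calc truncRoot p δ (ρ ((m : ℝ) + 1))⁻¹ ≤ δ * (n / ((m : ℝ) + 1)) ^ α :=
          truncRoot_inv_le_of_div_rpow_le hp (by positivity) hN (hρpos _ (by positivity))
            (hρpos n hN) (hρA _ _ (by positivity) hmn)
      _ = δ * n ^ α * ((m : ℝ) + 1) ^ (-α) := by
          rw [Real.div_rpow hN.le (by positivity), Real.rpow_neg (by positivity), mul_assoc,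
            div_eq_mul_inv]
  have hpow : (n : ℝ) ^ α * (n : ℝ) ^ (1 - α) = n := by
    rw [← Real.rpow_add hN, add_sub_cancel, Real.rpow_one]
  calc ∑' m : ℕ, ENNReal.ofReal (truncRoot p δ (ρ ((m : ℝ) + 1))⁻¹)
      = ∑ m ∈ Finset.range n, ENNReal.ofReal (truncRoot p δ (ρ ((m : ℝ) + 1))⁻¹) :=
        tsum_eq_sum hvanish
    _ ≤ ∑ m ∈ Finset.range n, ENNReal.ofReal (δ * n ^ α * ((m : ℝ) + 1) ^ (-α)) :=
        Finset.sum_le_sum fun m hm => ENNReal.ofReal_le_ofReal (hterm m hm)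
    _ = ENNReal.ofReal (δ * n ^ α * ∑ m ∈ Finset.range n, ((m : ℝ) + 1) ^ (-α)) := by
        rw [Finset.mul_sum, ENNReal.ofReal_sum_of_nonneg fun _ _ => by positivity]
    _ ≤ ENNReal.ofReal (δ * n ^ α * ((n : ℝ) ^ (1 - α) / (1 - α))) :=
        ENNReal.ofReal_le_ofReal <|
          mul_le_mul_of_nonneg_left (sum_range_add_one_rpow_neg_le hα0 hα1 n) (by positivity)
    _ = ENNReal.ofReal (n * (1 / (1 - α) * δ)) := by
        congr 1
        linear_combination (δ / (1 - α)) * hpow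

/-- upper bound `a n ≤ C / ρ n` from sum inequalities against test
functions `h` with `h(t^p)` convex. -/
theorem stmt1 (p A : ℝ) (hA : 0 < A) (hAp : A < p) :
    ∃ C > (0:ℝ), ∀ (ρ : ℝ → ℝ) (a : ℕ → ℝ),
      (∀ x : ℝ, 0 < x → 0 < ρ x) →
      MonotoneOn ρ (Set.Ioi 0) →
      (∀ x y : ℝ, 0 < x → x ≤ y → ρ y / y ^ A ≤ ρ x / x ^ A) →
      (∀ n, 0 ≤ a n) →
      (∀ m n : ℕ, 1 ≤ m → m ≤ n → a n ≤ a m) →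
      (∀ h : ℝ → ℝ, MonotoneOn h (Set.Ici 0) → h 0 = 0 →
        ConvexOn ℝ (Set.Ici 0) (fun t => h (t ^ p)) →
        ∑' n : ℕ, ENNReal.ofReal (h (a (n+1))) ≤
          ∑' n : ℕ, ENNReal.ofReal (h (1 / ρ ((n : ℝ) + 1)))) →
      ∀ n : ℕ, 1 ≤ n → a n ≤ C / ρ (n : ℝ) := by
  have hp : 0 < p := hA.trans hAp
  have h1α : 0 < 1 - A / p := sub_pos.2 ((div_lt_one hp).2 hAp)
  have hC : 0 < 1 + 1 / (1 - A / p) := by positivity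
  refine ⟨(1 + 1 / (1 - A / p)) ^ p, Real.rpow_pos_of_pos hC p, ?_⟩
  intro ρ a hρpos hρmono hρA ha0 hamono hsum n hn
  have hN : (0 : ℝ) < n := Nat.cast_pos.2 hn
  have hρn := hρpos n hN
  set δ := (ρ n)⁻¹ ^ p⁻¹
  have hδ : 0 < δ := by positivity
  have hcompare := hsum (truncRoot p δ) (monotoneOn_truncRoot hp) (truncRoot_zero hp.ne' hδ.le)
    (convexOn_truncRoot_rpow hp.ne')
  simp only [one_div] at hcompare
  have hleft : (n : ℝ≥0∞) * ENNReal.ofReal (truncRoot p δ (a n)) ≤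
      ∑' m : ℕ, ENNReal.ofReal (truncRoot p δ (a (m + 1))) :=
    natCast_mul_le_tsum fun m hm => ENNReal.ofReal_le_ofReal <|
      monotoneOn_truncRoot hp (ha0 n) (ha0 _) (hamono _ _ (by omega) (by omega))
  have hbound : n * truncRoot p δ (a n) ≤ n * (1 / (1 - A / p) * δ) := by
    rw [← ENNReal.ofReal_le_ofReal_iff (by positivity), ENNReal.ofReal_mul hN.le,
      ENNReal.ofReal_natCast]
    exact hleft.trans (hcompare.trans (tsum_truncRoot_inv_le hA.le hAp hρpos hρmono hρA hn))
  calc a n ≤ ((1 + 1 / (1 - A / p)) * δ) ^ p :=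
        le_rpow_of_truncRoot_le hp (ha0 n) (le_of_mul_le_mul_left hbound hN)
    _ = (1 + 1 / (1 - A / p)) ^ p / ρ n := by
        rw [Real.mul_rpow hC.le hδ.le, ← Real.rpow_mul (by positivity),
          inv_mul_cancel₀ hp.ne', Real.rpow_one, ← div_eq_mul_inv]
end

section
/- Let $\beta \geq 0$ and let $\omega$ be a weight on $\mathbb{D}$ with associated function $\tau_\omega$ satisfying $\tau_\omega^2(z) \asymp (1-|z|^2)^{2+\beta}$. Define $d\lambda_\omega = dA/\tau_\omega^2$ and the distribution function $\mathcal{R}_{z,\omega}(t) = \lambda_\omega(\{w \in \mathbb{D} : \tau_\omega(w) > t\})$. Then $\mathcal{R}_{z,\omega}(t) \asymp t^{-\frac{2(1+\beta)}{2+\beta}}$ as $t \to 0^+$, and consequently the decreasing rearrangement satisfies $\mathcal{R}^+_{z,\omega}(n) \asymp n^{-\frac{2+\beta}{2(1+\beta)}}$ as $n\to\infty$. -/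
/-!
Write `ρ(z) = 1 - |z|²` and `p = 2 + β`, so that `τ² ≍ ρ^p`. For small `t`, the superlevel set
`{τ > t}` contains the annulus `{δ < ρ ≤ 2δ}` with `c δ^p = t²`, of area `π δ`, on which
`1/τ² ≳ δ^{-p}`; and it is contained in `{ρ > δ}` with `C δ^p = t²`, which splits into the dyadic
annuli `{2ᵏδ < ρ ≤ 2ᵏ⁺¹δ}` whose `λ_ω`-masses `≲ (2ᵏδ)^{1-p}` form a geometric series. Both
bounds are `≍ δ^{1-p} ≍ t^{-2(p-1)/p}`. Inverting this power law gives the decreasing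
rearrangement.
-/

open MeasureTheory Metric Real
open scoped ENNReal

lemma Complex.volume_ball_zero_sqrt {a : ℝ} (ha : 0 ≤ a) :
    volume (ball (0 : ℂ) √a) = ENNReal.ofReal (π * a) := by
  rw [Complex.volume_ball, ← ENNReal.ofReal_pow (sqrt_nonneg a), sq_sqrt ha,
    ← ENNReal.ofReal_coe_nnreal, NNReal.coe_real_pi, ← ENNReal.ofReal_mul ha, mul_comm]

lemma Complex.volume_setOf_norm_sq_mem_Ico {a b : ℝ} (ha : 0 ≤ a) (hab : a ≤ b) :
    volume {z : ℂ | ‖z‖ ^ 2 ∈ Set.Ico a b} = ENNReal.ofReal (π * (b - a)) := by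
  have hset : {z : ℂ | ‖z‖ ^ 2 ∈ Set.Ico a b} = ball 0 √b \ ball 0 √a := by
    ext z
    simp only [Set.mem_ofPred_eq, Set.mem_Ico, Set.mem_sdiff, mem_ball_zero_iff,
      lt_sqrt (norm_nonneg z), not_lt]
    exact and_comm
  rw [hset, measure_sdiff (ball_subset_ball (sqrt_le_sqrt hab))
      measurableSet_ball.nullMeasurableSet measure_ball_lt_top.ne,
    volume_ball_zero_sqrt (ha.trans hab), volume_ball_zero_sqrt ha,
    ← ENNReal.ofReal_sub _ (by positivity), mul_sub]

def diskShell (a b : ℝ) : Set ℂ := {z | 1 - ‖z‖ ^ 2 ∈ Set.Ioc a b}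

lemma measurableSet_diskShell (a b : ℝ) : MeasurableSet (diskShell a b) :=
  (by fun_prop : Measurable fun z : ℂ => 1 - ‖z‖ ^ 2) measurableSet_Ioc

lemma volume_diskShell {a b : ℝ} (hab : a ≤ b) (hb : b ≤ 1) :
    volume (diskShell a b) = ENNReal.ofReal (π * (b - a)) := by
  have hset : diskShell a b = {z : ℂ | ‖z‖ ^ 2 ∈ Set.Ico (1 - b) (1 - a)} := by
    ext z
    simp only [diskShell, Set.mem_ofPred_eq, Set.mem_Ico, Set.mem_Ioc]
    constructor <;> rintro ⟨h₁, h₂⟩ <;> constructor <;> linarith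
  rw [hset, Complex.volume_setOf_norm_sq_mem_Ico (by linarith) (by linarith)]
  ring_nf

lemma volume_diskShell_le (a b : ℝ) : volume (diskShell a b) ≤ ENNReal.ofReal (π * (b - a)) := by
  have hsub : diskShell a b ⊆ diskShell a (min b 1) := fun z hz =>
    ⟨hz.1, le_min hz.2 (by linarith [sq_nonneg ‖z‖])⟩
  by_cases h : a ≤ min b 1
  · calc volume (diskShell a b) ≤ volume (diskShell a (min b 1)) := measure_mono hsub
      _ = ENNReal.ofReal (π * (min b 1 - a)) := volume_diskShell h (min_le_right b 1)
      _ ≤ ENNReal.ofReal (π * (b - a)) := by gcongr; exact min_le_left b 1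
  · have hempty : diskShell a b = ∅ :=
      Set.eq_empty_of_forall_notMem fun z hz => h ((hsub hz).1.le.trans (hsub hz).2)
    simp [hempty]

lemma diskShell_subset_ball {a : ℝ} (ha : 0 ≤ a) (b : ℝ) : diskShell a b ⊆ ball 0 1 := by
  intro z hz
  rw [mem_ball_zero_iff, ← sq_lt_one_iff₀ (norm_nonneg z)]
  linarith [hz.1]

lemma exists_two_pow_mul_lt_and_le {δ y : ℝ} (hδ : 0 < δ) (hy : δ < y) :
    ∃ k : ℕ, 2 ^ k * δ < y ∧ y ≤ 2 ^ (k + 1) * δ := by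
  classical
  have hex : ∃ k : ℕ, y ≤ 2 ^ (k + 1) * δ := by
    obtain ⟨n, hn⟩ := pow_unbounded_of_one_lt (y / δ) one_lt_two
    rw [div_lt_iff₀ hδ] at hn
    exact ⟨n, by rw [pow_succ]; nlinarith [pow_pos (two_pos : (0:ℝ) < 2) n]⟩
  refine ⟨Nat.find hex, ?_, Nat.find_spec hex⟩
  rcases hk : Nat.find hex with _ | m
  · simpa using hy
  · exact not_le.mp (Nat.find_min hex (hk ▸ Nat.lt_succ_self m))

lemma setLIntegral_diskShell_rpow_neg_le {a p : ℝ} (ha : 0 < a) (hp : 0 ≤ p) :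
    ∫⁻ z in diskShell a (2 * a), ENNReal.ofReal ((1 - ‖z‖ ^ 2) ^ (-p))
      ≤ ENNReal.ofReal (π * a ^ (1 - p)) := by
  calc ∫⁻ z in diskShell a (2 * a), ENNReal.ofReal ((1 - ‖z‖ ^ 2) ^ (-p))
      ≤ ∫⁻ _ in diskShell a (2 * a), ENNReal.ofReal (a ^ (-p)) :=
        setLIntegral_mono' (measurableSet_diskShell _ _) fun z hz =>
          ENNReal.ofReal_le_ofReal (rpow_le_rpow_of_nonpos ha hz.1.le (neg_nonpos.mpr hp))
    _ = ENNReal.ofReal (a ^ (-p)) * volume (diskShell a (2 * a)) := setLIntegral_const _ _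
    _ ≤ ENNReal.ofReal (a ^ (-p)) * ENNReal.ofReal (π * (2 * a - a)) := by
        gcongr; exact volume_diskShell_le _ _
    _ = ENNReal.ofReal (π * a ^ (1 - p)) := by
        rw [← ENNReal.ofReal_mul (by positivity), sub_eq_neg_add 1 p, rpow_add ha, rpow_one]
        ring_nf

lemma setLIntegral_one_sub_norm_sq_rpow_neg_le {δ p : ℝ} (hδ : 0 < δ) (hp : 1 < p) :
    ∫⁻ z in diskShell δ 1, ENNReal.ofReal ((1 - ‖z‖ ^ 2) ^ (-p))
      ≤ ENNReal.ofReal (π / (1 - 2 ^ (1 - p)) * δ ^ (1 - p)) := by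
  set r : ℝ := 2 ^ (1 - p)
  have hr0 : 0 ≤ r := by positivity
  have hr1 : r < 1 := rpow_lt_one_of_one_lt_of_neg one_lt_two (by linarith)
  have hcover : diskShell δ 1 ⊆ ⋃ k : ℕ, diskShell (2 ^ k * δ) (2 * (2 ^ k * δ)) := by
    intro z hz
    obtain ⟨k, hk⟩ := exists_two_pow_mul_lt_and_le hδ hz.1
    exact Set.mem_iUnion.mpr ⟨k, hk.1, by rw [← mul_assoc, ← pow_succ']; exact hk.2⟩
  have hshell : ∀ k : ℕ, (2 ^ k * δ) ^ (1 - p) = δ ^ (1 - p) * r ^ k := fun k => by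
    rw [mul_rpow (by positivity) hδ.le, mul_comm, ← rpow_natCast 2 k, ← rpow_mul zero_le_two,
      mul_comm (k : ℝ), rpow_mul zero_le_two, rpow_natCast]
  calc ∫⁻ z in diskShell δ 1, ENNReal.ofReal ((1 - ‖z‖ ^ 2) ^ (-p))
      ≤ ∑' k : ℕ, ∫⁻ z in diskShell (2 ^ k * δ) (2 * (2 ^ k * δ)),
          ENNReal.ofReal ((1 - ‖z‖ ^ 2) ^ (-p)) :=
        (lintegral_mono_set hcover).trans (lintegral_iUnion_le _ _)
    _ ≤ ∑' k : ℕ, ENNReal.ofReal (π * δ ^ (1 - p)) * ENNReal.ofReal r ^ k := by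
        refine ENNReal.tsum_le_tsum fun k => ?_
        refine (setLIntegral_diskShell_rpow_neg_le (by positivity) (by linarith)).trans_eq ?_
        rw [hshell, ← ENNReal.ofReal_pow hr0, ← ENNReal.ofReal_mul (by positivity), mul_assoc]
    _ = ENNReal.ofReal (π / (1 - r) * δ ^ (1 - p)) := by
        rw [ENNReal.tsum_mul_left, ENNReal.tsum_geometric, ← ENNReal.ofReal_one,
          ← ENNReal.ofReal_sub _ hr0, ← ENNReal.ofReal_inv_of_pos (by linarith),
          ← ENNReal.ofReal_mul (by positivity)]
        ring_nf

lemma mul_sq_rpow_inv_rpow_one_sub {k t p : ℝ} (hk : 0 ≤ k) (ht : 0 ≤ t) :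
    ((k * t ^ 2) ^ p⁻¹) ^ (1 - p) = k ^ ((1 - p) / p) * t ^ (-(2 * (p - 1) / p)) := by
  rw [← rpow_mul (by positivity), mul_rpow hk (by positivity), ← rpow_natCast t 2,
    ← rpow_mul ht]
  congr 2 <;> push_cast <;> ring

noncomputable def weightedDiskMeasure (τ : ℂ → ℝ) : Measure ℂ :=
  (volume.restrict (ball 0 1)).withDensity fun z => ENNReal.ofReal (1 / τ z ^ 2)

lemma weightedDiskMeasure_apply_of_subset_ball (τ : ℂ → ℝ) {s : Set ℂ} (hs : MeasurableSet s)
    (hs₁ : s ⊆ ball 0 1) :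
    weightedDiskMeasure τ s = ∫⁻ z in s, ENNReal.ofReal (1 / τ z ^ 2) := by
  rw [weightedDiskMeasure, withDensity_apply _ hs, Measure.restrict_restrict hs,
    Set.inter_eq_left.mpr hs₁]

section Superlevel

variable {τ : ℂ → ℝ} {c C p : ℝ}
  (hcomp : ∀ z ∈ ball (0 : ℂ) 1,
    c * (1 - ‖z‖ ^ 2) ^ p ≤ τ z ^ 2 ∧ τ z ^ 2 ≤ C * (1 - ‖z‖ ^ 2) ^ p)
include hcomp

lemma ofReal_le_weightedDiskMeasure_superlevel {δ t : ℝ} (hτ : ∀ z ∈ ball (0 : ℂ) 1, 0 ≤ τ z)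
    (hc : 0 < c) (hC : 0 ≤ C) (hp : 0 < p) (hδ : 0 < δ) (hδ₁ : 2 * δ ≤ 1) (ht : t ^ 2 ≤ c * δ ^ p) :
    ENNReal.ofReal (π / (C * 2 ^ p) * δ ^ (1 - p))
      ≤ weightedDiskMeasure τ {w ∈ ball 0 1 | t < τ w} := by
  have hball := diskShell_subset_ball hδ.le (2 * δ)
  have hτ_gt : ∀ z ∈ diskShell δ (2 * δ), c * δ ^ p < τ z ^ 2 := fun z hz =>
    (mul_lt_mul_of_pos_left (rpow_lt_rpow hδ.le hz.1 (by positivity)) hc).trans_le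
      (hcomp z (hball hz)).1
  have hsub : diskShell δ (2 * δ) ⊆ {w ∈ ball 0 1 | t < τ w} := fun z hz =>
    ⟨hball hz, lt_of_pow_lt_pow_left₀ 2 (hτ z (hball hz)) (ht.trans_lt (hτ_gt z hz))⟩
  have hdens : ∀ z ∈ diskShell δ (2 * δ),
      ENNReal.ofReal (C * (2 * δ) ^ p)⁻¹ ≤ ENNReal.ofReal (1 / τ z ^ 2) := fun z hz => by
    refine ENNReal.ofReal_le_ofReal ?_
    rw [one_div]
    refine inv_anti₀ ((by positivity : 0 < c * δ ^ p).trans (hτ_gt z hz)) ?_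
    exact (hcomp z (hball hz)).2.trans (by gcongr; exacts [hδ.le.trans hz.1.le, hz.2])
  calc ENNReal.ofReal (π / (C * 2 ^ p) * δ ^ (1 - p))
      = ENNReal.ofReal (C * (2 * δ) ^ p)⁻¹ * ENNReal.ofReal (π * (2 * δ - δ)) := by
        rw [← ENNReal.ofReal_mul (by positivity), mul_rpow zero_le_two hδ.le, rpow_sub hδ,
          rpow_one]
        congr 1
        field_simp
        ring
    _ = ∫⁻ _ in diskShell δ (2 * δ), ENNReal.ofReal (C * (2 * δ) ^ p)⁻¹ := by
        rw [setLIntegral_const, volume_diskShell (by linarith) hδ₁]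
    _ ≤ ∫⁻ z in diskShell δ (2 * δ), ENNReal.ofReal (1 / τ z ^ 2) :=
        setLIntegral_mono' (measurableSet_diskShell _ _) hdens
    _ = weightedDiskMeasure τ (diskShell δ (2 * δ)) :=
        (weightedDiskMeasure_apply_of_subset_ball τ (measurableSet_diskShell _ _) hball).symm
    _ ≤ weightedDiskMeasure τ {w ∈ ball 0 1 | t < τ w} := measure_mono hsub

lemma weightedDiskMeasure_superlevel_le {δ t : ℝ} (hc : 0 < c) (hC : 0 < C) (hp : 1 < p)
    (hδ : 0 < δ) (ht : 0 ≤ t) (htδ : C * δ ^ p ≤ t ^ 2) :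
    weightedDiskMeasure τ {w ∈ ball 0 1 | t < τ w}
      ≤ ENNReal.ofReal (π / (c * (1 - 2 ^ (1 - p))) * δ ^ (1 - p)) := by
  have hball := diskShell_subset_ball hδ.le 1
  have hsub : {w ∈ ball 0 1 | t < τ w} ⊆ diskShell δ 1 := by
    rintro z ⟨hz, htz⟩
    have hρ : 0 ≤ 1 - ‖z‖ ^ 2 := by
      rw [mem_ball_zero_iff, ← sq_lt_one_iff₀ (norm_nonneg z)] at hz
      linarith
    have : C * δ ^ p < C * (1 - ‖z‖ ^ 2) ^ p :=
      htδ.trans_lt ((pow_lt_pow_left₀ htz ht two_ne_zero).trans_le (hcomp z hz).2)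
    refine ⟨(rpow_lt_rpow_iff hδ.le hρ (by linarith)).mp (lt_of_mul_lt_mul_left this hC.le), ?_⟩
    linarith [sq_nonneg ‖z‖]
  have hdens : ∀ z ∈ diskShell δ 1, ENNReal.ofReal (1 / τ z ^ 2)
      ≤ ENNReal.ofReal c⁻¹ * ENNReal.ofReal ((1 - ‖z‖ ^ 2) ^ (-p)) := fun z hz => by
    have hρ : 0 < 1 - ‖z‖ ^ 2 := hδ.trans hz.1
    rw [← ENNReal.ofReal_mul (by positivity), rpow_neg hρ.le, ← mul_inv, one_div]
    exact ENNReal.ofReal_le_ofReal (inv_anti₀ (by positivity) (hcomp z (hball hz)).1)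
  calc weightedDiskMeasure τ {w ∈ ball 0 1 | t < τ w}
      ≤ weightedDiskMeasure τ (diskShell δ 1) := measure_mono hsub
    _ = ∫⁻ z in diskShell δ 1, ENNReal.ofReal (1 / τ z ^ 2) :=
        weightedDiskMeasure_apply_of_subset_ball τ (measurableSet_diskShell _ _) hball
    _ ≤ ∫⁻ z in diskShell δ 1, ENNReal.ofReal c⁻¹ * ENNReal.ofReal ((1 - ‖z‖ ^ 2) ^ (-p)) :=
        setLIntegral_mono' (measurableSet_diskShell _ _) hdens
    _ = ENNReal.ofReal c⁻¹ * ∫⁻ z in diskShell δ 1, ENNReal.ofReal ((1 - ‖z‖ ^ 2) ^ (-p)) :=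
        lintegral_const_mul' _ _ ENNReal.ofReal_ne_top
    _ ≤ ENNReal.ofReal c⁻¹ * ENNReal.ofReal (π / (1 - 2 ^ (1 - p)) * δ ^ (1 - p)) := by
        gcongr
        exact setLIntegral_one_sub_norm_sq_rpow_neg_le hδ hp
    _ = ENNReal.ofReal (π / (c * (1 - 2 ^ (1 - p))) * δ ^ (1 - p)) := by
        rw [← ENNReal.ofReal_mul (by positivity)]
        congr 1
        field_simp

theorem weightedDiskMeasure_superlevel_asymp (hτ : ∀ z ∈ ball (0 : ℂ) 1, 0 ≤ τ z)
    (hc : 0 < c) (hC : 0 < C) (hp : 1 < p) :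
    ∃ c' > (0 : ℝ), ∃ C' > (0 : ℝ), ∃ t₀ > (0 : ℝ),
      (∀ t : ℝ, 0 < t → t < t₀ → ENNReal.ofReal (c' * t ^ (-(2 * (p - 1) / p)))
        ≤ weightedDiskMeasure τ {w ∈ ball 0 1 | t < τ w}) ∧
      ∀ t : ℝ, 0 < t → weightedDiskMeasure τ {w ∈ ball 0 1 | t < τ w}
        ≤ ENNReal.ofReal (C' * t ^ (-(2 * (p - 1) / p))) := by
  have hr : 0 < 1 - (2 : ℝ) ^ (1 - p) :=
    sub_pos.mpr (rpow_lt_one_of_one_lt_of_neg one_lt_two (by linarith))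
  have hp₀ : 0 < p := by linarith
  refine ⟨π / (C * 2 ^ p) * c⁻¹ ^ ((1 - p) / p), by positivity,
    π / (c * (1 - 2 ^ (1 - p))) * C⁻¹ ^ ((1 - p) / p), by positivity,
    √(c * 2⁻¹ ^ p), by positivity, fun t ht htt => ?_, fun t ht => ?_⟩
  · set δ := (c⁻¹ * t ^ 2) ^ p⁻¹
    have hδp : c * δ ^ p = t ^ 2 := by
      rw [rpow_inv_rpow (by positivity) hp₀.ne']; field_simp
    have hδ₁ : 2 * δ ≤ 1 := by
      have h : c⁻¹ * t ^ 2 ≤ 2⁻¹ ^ p := by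
        rw [lt_sqrt ht.le] at htt
        rw [inv_mul_le_iff₀ hc]
        exact htt.le
      have := rpow_le_rpow (by positivity) h (inv_nonneg.mpr hp₀.le)
      rw [rpow_rpow_inv (by norm_num) hp₀.ne'] at this
      linarith
    have := ofReal_le_weightedDiskMeasure_superlevel hcomp hτ hc hC.le hp₀ (by positivity) hδ₁
      hδp.ge
    rwa [mul_sq_rpow_inv_rpow_one_sub (by positivity) ht.le, ← mul_assoc] at this
  · set δ := (C⁻¹ * t ^ 2) ^ p⁻¹
    have hδp : C * δ ^ p = t ^ 2 := by
      rw [rpow_inv_rpow (by positivity) hp₀.ne']; field_simp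
    have := weightedDiskMeasure_superlevel_le hcomp hc hC hp (by positivity) ht.le hδp.le
    rwa [mul_sq_rpow_inv_rpow_one_sub (by positivity) ht.le, ← mul_assoc] at this

end Superlevel

lemma rearrangement_bounds_of_rpow_bounds {R : ℝ → ℝ≥0∞} {α c C t₀ x : ℝ} (hα : 0 < α) (hc : 0 < c)
    (hC : 0 ≤ C) (ht₀ : 0 < t₀)
    (hlow : ∀ t : ℝ, 0 < t → t < t₀ → ENNReal.ofReal (c * t ^ (-α)) ≤ R t)
    (hup : ∀ t : ℝ, 0 < t → R t ≤ ENNReal.ofReal (C * t ^ (-α))) (hx : c / t₀ ^ α < x) :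
    c ^ α⁻¹ * x ^ (-α⁻¹) ≤ sSup {t : ℝ | 0 < t ∧ ENNReal.ofReal x ≤ R t} ∧
      sSup {t : ℝ | 0 < t ∧ ENNReal.ofReal x ≤ R t} ≤ C ^ α⁻¹ * x ^ (-α⁻¹) := by
  have hx₀ : 0 < x := (by positivity : 0 < c / t₀ ^ α).trans hx
  have hroot : ∀ K, 0 ≤ K → (K / x) ^ α⁻¹ = K ^ α⁻¹ * x ^ (-α⁻¹) := fun K hK => by
    rw [div_rpow hK hx₀.le, rpow_neg hx₀.le, div_eq_mul_inv]
  have hub : ∀ s ∈ {t : ℝ | 0 < t ∧ ENNReal.ofReal x ≤ R t}, s ≤ C ^ α⁻¹ * x ^ (-α⁻¹) := by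
    rintro s ⟨hs, hsR⟩
    have hxs : x ≤ C * s ^ (-α) :=
      (ENNReal.ofReal_le_ofReal_iff'.mp (hsR.trans (hup s hs))).resolve_right hx₀.not_ge
    have hsα : s ^ α ≤ C / x := by
      rw [rpow_neg hs.le, ← div_eq_mul_inv, le_div_iff₀ (by positivity)] at hxs
      rwa [le_div_iff₀ hx₀, mul_comm]
    calc s = (s ^ α) ^ α⁻¹ := (rpow_rpow_inv hs.le hα.ne').symm
      _ ≤ (C / x) ^ α⁻¹ := rpow_le_rpow (by positivity) hsα (inv_nonneg.mpr hα.le)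
      _ = C ^ α⁻¹ * x ^ (-α⁻¹) := hroot C hC
  have hmem : c ^ α⁻¹ * x ^ (-α⁻¹) ∈ {t : ℝ | 0 < t ∧ ENNReal.ofReal x ≤ R t} := by
    rw [← hroot c hc.le]
    have hlt : (c / x) ^ α⁻¹ < t₀ := by
      rw [div_lt_iff₀ (by positivity), ← div_lt_iff₀' hx₀] at hx
      simpa [rpow_rpow_inv ht₀.le hα.ne'] using
        rpow_lt_rpow (by positivity) hx (inv_pos.mpr hα)
    refine ⟨by positivity, le_of_eq_of_le ?_ (hlow _ (by positivity) hlt)⟩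
    rw [rpow_neg (by positivity), rpow_inv_rpow (by positivity) hα.ne']
    field_simp
  exact ⟨le_csSup ⟨_, hub⟩ hmem, csSup_le ⟨_, hmem⟩ hub⟩

/-- if `τ_ω²(z) ≍ (1-|z|²)^{2+β}` then the distribution function of
`τ_ω` with respect to `dλ_ω = dA/τ_ω²` satisfies `𝓡(t) ≍ t^{-2(1+β)/(2+β)}` as
`t → 0⁺`, and the decreasing rearrangement satisfies
`𝓡⁺(n) ≍ n^{-(2+β)/(2(1+β))}`. -/
theorem stmt15 (β : ℝ) (hβ : 0 ≤ β) (τ : ℂ → ℝ)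
    (hτpos : ∀ z ∈ ball (0:ℂ) 1, 0 < τ z)
    (hcomp : ∃ c > (0:ℝ), ∃ C > (0:ℝ), ∀ z ∈ ball (0:ℂ) 1,
      c * (1 - ‖z‖ ^ 2) ^ (2 + β) ≤ τ z ^ 2 ∧
      τ z ^ 2 ≤ C * (1 - ‖z‖ ^ 2) ^ (2 + β)) :
    -- the measure `λ_ω` and the distribution function `𝓡`
    ∀ lamω : Measure ℂ, lamω =
        (volume.restrict (ball (0:ℂ) 1)).withDensity
          (fun z => ENNReal.ofReal (1 / τ z ^ 2)) →
    ∀ R : ℝ → ℝ≥0∞, (∀ t : ℝ, R t = lamω {w ∈ ball (0:ℂ) 1 | t < τ w}) →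
    ∀ Rplus : ℝ → ℝ, (∀ x : ℝ, Rplus x =
        sSup {t : ℝ | 0 < t ∧ ENNReal.ofReal x ≤ R t}) →
      ((∃ c > (0:ℝ), ∃ C > (0:ℝ), ∃ t₀ > (0:ℝ), ∀ t : ℝ, 0 < t → t < t₀ →
          ENNReal.ofReal (c * t ^ (-(2 * (1 + β) / (2 + β)))) ≤ R t ∧
          R t ≤ ENNReal.ofReal (C * t ^ (-(2 * (1 + β) / (2 + β))))) ∧
       (∃ c > (0:ℝ), ∃ C > (0:ℝ), ∃ n₀ : ℕ, ∀ n : ℕ, n₀ ≤ n →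
          c * (n : ℝ) ^ (-((2 + β) / (2 * (1 + β)))) ≤ Rplus n ∧
          Rplus n ≤ C * (n : ℝ) ^ (-((2 + β) / (2 * (1 + β)))))) := by
  obtain ⟨c, hc, C, hC, hcomp⟩ := hcomp
  intro lamω hlam R hR Rplus hRplus
  subst hlam
  obtain ⟨c', hc', C', hC', t₀, ht₀, hlow, hup⟩ := weightedDiskMeasure_superlevel_asymp hcomp
    (fun z hz => (hτpos z hz).le) hc hC (by linarith)
  rw [show (2 : ℝ) + β - 1 = 1 + β by ring] at hlow hup
  set α := 2 * (1 + β) / (2 + β)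
  replace hlow : ∀ t, 0 < t → t < t₀ → ENNReal.ofReal (c' * t ^ (-α)) ≤ R t := fun t ht htt =>
    (hR t).symm ▸ hlow t ht htt
  replace hup : ∀ t, 0 < t → R t ≤ ENNReal.ofReal (C' * t ^ (-α)) := fun t ht =>
    (hR t).symm ▸ hup t ht
  refine ⟨⟨c', hc', C', hC', t₀, ht₀, fun t ht htt => ⟨hlow t ht htt, hup t ht⟩⟩, ?_⟩
  obtain ⟨n₀, hn₀⟩ := exists_nat_gt (c' / t₀ ^ α)
  refine ⟨c' ^ α⁻¹, by positivity, C' ^ α⁻¹, by positivity, n₀, fun n hn => ?_⟩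
  rw [hRplus, ← inv_div (2 * (1 + β))]
  exact rearrangement_bounds_of_rpow_bounds (by positivity) hc' hC'.le ht₀ hlow hup
    (hn₀.trans_le (Nat.cast_le.mpr hn))
end

section
/- Let $\alpha > 0$, $\gamma \in (1, \alpha+1)$, and set $\phi'(z) = \frac{1}{(1-z)\log^\gamma(\frac{e}{1-z})}$ for $z$ in the unit disc. Then $\phi'$ belongs to the Hardy space $H^1$, i.e., $\sup_{0\leq r<1}\frac{1}{2\pi}\int_0^{2\pi}|\phi'(re^{i\theta})|\,d\theta < \infty$. -/
/-!
Write `w = 1 - z`. Since `Re log (e / w) = 1 - log |w|`, which is positive for `|w| ≤ 2`, one has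
`|φ'(z)| ≤ 1 / (|w| (1 - log |w|)^γ)`. Replacing the `1` in this kernel by `γ + 1` costs only a
constant factor and makes `t ↦ 1 / (t (γ + 1 - log t)^γ)` decreasing on `(0, e]`. On the circle
`|z| = r`, uniformly in `r`, `|1 - r e^{iθ}| ≥ |θ| / π` for `|θ| ≤ π`, so over the period
`[-π, π]` the integrand is dominated by a multiple of the new kernel at `|θ| / π`. This is
integrable because `(c - log t)^(1 - γ) / (γ - 1)` is a primitive of `1 / (t (c - log t)^γ)` which
tends to `0` at `0⁺` when `γ > 1`.
-/

open Complex Real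

open Set MeasureTheory Filter Topology

noncomputable def logKernel (c γ t : ℝ) : ℝ := (t * (c - Real.log t) ^ γ)⁻¹

theorem logKernel_nonneg {c γ t : ℝ} (ht : 0 ≤ t) (htc : Real.log t ≤ c) :
    0 ≤ logKernel c γ t :=
  inv_nonneg.2 (mul_nonneg ht (Real.rpow_nonneg (sub_nonneg.2 htc) γ))

theorem logKernel_antitoneOn {c γ : ℝ} (hγ : 0 < γ) :
    AntitoneOn (logKernel c γ) (Ioc 0 (Real.exp (c - γ))) := by
  have hbase : ∀ t ∈ Ioc 0 (Real.exp (c - γ)), γ ≤ c - Real.log t := fun t ht => by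
    have := (Real.log_le_iff_le_exp ht.1).2 ht.2
    linarith
  have hmono : MonotoneOn (fun t => t * (c - Real.log t) ^ γ) (Ioc 0 (Real.exp (c - γ))) := by
    refine monotoneOn_of_hasDerivWithinAt_nonneg (convex_Ioc _ _)
      (f' := fun t => (c - Real.log t) ^ (γ - 1) * (c - Real.log t - γ)) ?_ ?_ ?_
    · intro t ht
      exact (continuousAt_id.mul (((Real.continuousAt_log ht.1.ne').const_sub c).rpow_const
        (Or.inr hγ.le))).continuousWithinAt
    · intro t ht
      rw [interior_Ioc] at ht
      have hpos : 0 < c - Real.log t := hγ.trans_le (hbase t (Ioo_subset_Ioc_self ht))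
      have h := (hasDerivAt_id t).mul
        (((Real.hasDerivAt_log ht.1.ne').const_sub c).rpow_const (p := γ) (Or.inl hpos.ne'))
      refine (h.congr_deriv ?_).hasDerivWithinAt
      have ht0 : t ≠ 0 := ht.1.ne'
      rw [Real.rpow_sub_one hpos.ne', id]
      field_simp
      ring
    · intro t ht
      rw [interior_Ioc] at ht
      have h := hbase t (Ioo_subset_Ioc_self ht)
      exact mul_nonneg (Real.rpow_nonneg (by linarith) _) (by linarith)
  intro s hs t ht hst
  have hpos : 0 < s * (c - Real.log s) ^ γ :=
    mul_pos hs.1 (Real.rpow_pos_of_pos (hγ.trans_le (hbase s hs)) γ)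
  exact inv_anti₀ hpos (hmono hs ht hst)

theorem logKernel_le_rpow_mul_logKernel {a c γ T t : ℝ} (hac : a ≤ c) (hγ : 0 ≤ γ)
    (hT : Real.log T < a) (ht : 0 < t) (htT : t ≤ T) :
    logKernel a γ t ≤ ((c - Real.log T) / (a - Real.log T)) ^ γ * logKernel c γ t := by
  have hlog : Real.log t ≤ Real.log T := Real.log_le_log ht htT
  set B := (c - Real.log T) / (a - Real.log T)
  have hB : 0 < B := div_pos (by linarith) (by linarith)
  have hkey : c - Real.log t ≤ B * (a - Real.log t) := by
    rw [div_mul_eq_mul_div, le_div_iff₀ (by linarith)]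
    nlinarith
  calc logKernel a γ t = B ^ γ * (t * (B * (a - Real.log t)) ^ γ)⁻¹ := by
        rw [logKernel, Real.mul_rpow hB.le (by linarith)]
        field_simp
    _ ≤ B ^ γ * logKernel c γ t := by
        have hc : 0 < c - Real.log t := by linarith
        unfold logKernel
        gcongr B ^ γ * ?_
        exact inv_anti₀ (mul_pos ht (Real.rpow_pos_of_pos hc γ)) (by gcongr)

theorem hasDerivAt_sub_log_rpow_div {c γ t : ℝ} (hγ : γ ≠ 1) (ht : 0 < t) (htc : Real.log t < c) :
    HasDerivAt (fun s => (c - Real.log s) ^ (1 - γ) / (γ - 1)) (logKernel c γ t) t := by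
  have hpos : 0 < c - Real.log t := by linarith
  have h := (((Real.hasDerivAt_log ht.ne').const_sub c).rpow_const (p := 1 - γ)
    (Or.inl hpos.ne')).div_const (γ - 1)
  refine h.congr_deriv ?_
  rw [logKernel, show 1 - γ - 1 = -γ by ring, Real.rpow_neg hpos.le]
  have : γ - 1 ≠ 0 := sub_ne_zero.2 hγ
  field_simp
  ring

theorem integrableOn_logKernel {c γ b : ℝ} (hγ : 1 < γ) (hb : Real.log b < c) :
    IntegrableOn (logKernel c γ) (Ioc 0 b) := by
  -- `Real.log 0 = 0` gives the primitive a junk value at `0`; replace it by the limit there.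
  set F : ℝ → ℝ := fun s => (c - Real.log s) ^ (1 - γ) / (γ - 1)
  have hderiv : ∀ t ∈ Ioc 0 b, HasDerivAt (Function.update F 0 0) (logKernel c γ t) t := by
    intro t ht
    have htc : Real.log t < c := (Real.log_le_log ht.1 ht.2).trans_lt hb
    refine (hasDerivAt_sub_log_rpow_div hγ.ne' ht.1 htc).congr_of_eventuallyEq ?_
    filter_upwards [isOpen_ne.mem_nhds ht.1.ne'] with s hs
    exact Function.update_of_ne hs _ _
  have hlim : Tendsto F (𝓝[>] 0) (𝓝 0) := by
    have h1 : Tendsto (fun s => c - Real.log s) (𝓝[>] 0) atTop :=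
      tendsto_atTop_add_const_left _ c (tendsto_neg_atBot_atTop.comp tendsto_log_nhdsGT_zero)
    have h2 := ((tendsto_rpow_neg_atTop (by linarith : 0 < γ - 1)).comp h1).div_const (γ - 1)
    simpa [F, Function.comp_def] using h2
  refine intervalIntegral.integrableOn_deriv_of_nonneg (g := Function.update F 0 0) ?_
    (fun t ht => hderiv t (Ioo_subset_Ioc_self ht)) ?_
  · intro t ht
    rcases ht.1.eq_or_lt with rfl | htpos
    · refine continuousWithinAt_update_same.2 (hlim.mono_left (nhdsWithin_mono _ ?_))
      exact fun s hs => lt_of_le_of_ne hs.1.1 (Ne.symm hs.2)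
    · exact (hderiv t ⟨htpos, ht.2⟩).continuousAt.continuousWithinAt
  · intro t ht
    exact logKernel_nonneg ht.1.le ((Real.log_le_log ht.1 ht.2.le).trans hb.le)

theorem IntervalIntegrable.comp_abs {E : Type*} [NormedAddCommGroup E] {f : ℝ → E} {a : ℝ}
    (ha : 0 ≤ a) (hf : IntervalIntegrable f volume 0 a) :
    IntervalIntegrable (fun x => f |x|) volume (-a) a := by
  have hpos : IntervalIntegrable (fun x => f |x|) volume 0 a := by
    refine hf.congr ?_
    intro x hx
    rw [uIoc_of_le ha] at hx
    simp [abs_of_pos hx.1]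
  have hneg := ((IntervalIntegrable.iff_comp_neg enorm_ne_top).1 hpos).symm
  simp only [abs_neg, neg_zero] at hneg
  exact hneg.trans hpos

theorem norm_inv_mul_clog_cpow_le_logKernel {γ : ℝ} (hγ : 0 ≤ γ) {w : ℂ} (hw : w ≠ 0)
    (hw1 : Real.log ‖w‖ < 1) :
    ‖(w * Complex.log (Real.exp 1 / w) ^ (γ : ℂ))⁻¹‖ ≤ logKernel 1 γ ‖w‖ := by
  have hre : (Complex.log (Real.exp 1 / w)).re = 1 - Real.log ‖w‖ := by
    rw [Complex.log_re, norm_div, Complex.norm_real, Real.norm_of_nonneg (Real.exp_pos 1).le,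
      Real.log_div (Real.exp_pos 1).ne' (norm_ne_zero_iff.2 hw), Real.log_exp]
  have hpos : 0 < 1 - Real.log ‖w‖ := by linarith
  rw [norm_inv, norm_mul, Complex.norm_cpow_real, logKernel]
  refine inv_anti₀ (mul_pos (norm_pos_iff.2 hw) (Real.rpow_pos_of_pos hpos γ)) ?_
  gcongr
  exact hre ▸ Complex.re_le_norm _

theorem abs_div_pi_le_norm_one_sub_mul_exp {r θ : ℝ} (hr : 0 ≤ r) (hθ : |θ| ≤ π) :
    |θ| / π ≤ ‖1 - r * Complex.exp (θ * I)‖ := by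
  have hre : (1 - r * Complex.exp (θ * I)).re = 1 - r * Real.cos θ := by
    simp [Complex.exp_ofReal_mul_I_re]
  have him : (1 - r * Complex.exp (θ * I)).im = -(r * Real.sin θ) := by
    simp [Complex.exp_ofReal_mul_I_im]
  have hle_one : |θ| / π ≤ 1 := div_le_one_of_le₀ hθ pi_pos.le
  by_cases hcos : Real.cos θ ≤ 0
  · calc |θ| / π ≤ 1 - r * Real.cos θ := by nlinarith
      _ ≤ _ := hre ▸ Complex.re_le_norm _
  have hθ2 : |θ| ≤ π / 2 := by
    by_contra h
    rw [← Real.cos_abs] at hcos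
    exact hcos (Real.cos_nonpos_of_pi_div_two_le_of_le (not_le.1 h).le (by linarith))
  have hhalf : |θ| / π ≤ 1 / 2 := by
    rw [div_le_iff₀ pi_pos]
    linarith
  rcases le_total r (1 / 2) with hr2 | hr2
  · calc |θ| / π ≤ 1 - r := by linarith
      _ = ‖(1 : ℂ)‖ - ‖r * Complex.exp (θ * I)‖ := by simp [abs_of_nonneg hr]
      _ ≤ _ := norm_sub_norm_le _ _
  · calc |θ| / π = 1 / 2 * (2 / π * |θ|) := by field_simp
      _ ≤ r * |Real.sin θ| := by
        gcongr
        exact Real.mul_abs_le_abs_sin hθ2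
      _ = |(1 - r * Complex.exp (θ * I)).im| := by rw [him, abs_neg, abs_mul, abs_of_nonneg hr]
      _ ≤ _ := Complex.abs_im_le_norm _

theorem norm_inv_mul_clog_cpow_le {γ s T : ℝ} (hγ : 0 < γ) (hT : Real.log T < 1) {w : ℂ}
    (hs : 0 < s) (hsw : s ≤ ‖w‖) (hw : ‖w‖ ≤ T) :
    ‖(w * Complex.log (Real.exp 1 / w) ^ (γ : ℂ))⁻¹‖ ≤
      ((γ + 1 - Real.log T) / (1 - Real.log T)) ^ γ * logKernel (γ + 1) γ s := by
  have hw0 : 0 < ‖w‖ := hs.trans_le hsw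
  have hlog : Real.log ‖w‖ < 1 := (Real.log_le_log hw0 hw).trans_lt hT
  have hanti := logKernel_antitoneOn (c := γ + 1) hγ
  rw [add_sub_cancel_left] at hanti
  calc ‖(w * Complex.log (Real.exp 1 / w) ^ (γ : ℂ))⁻¹‖
      ≤ logKernel 1 γ ‖w‖ := norm_inv_mul_clog_cpow_le_logKernel hγ.le (norm_pos_iff.1 hw0) hlog
    _ ≤ ((γ + 1 - Real.log T) / (1 - Real.log T)) ^ γ * logKernel (γ + 1) γ ‖w‖ :=
        logKernel_le_rpow_mul_logKernel (by linarith) hγ.le hT hw0 hw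
    _ ≤ ((γ + 1 - Real.log T) / (1 - Real.log T)) ^ γ * logKernel (γ + 1) γ s := by
        have hwe : ‖w‖ ≤ Real.exp 1 := (Real.log_le_iff_le_exp hw0).1 hlog.le
        refine mul_le_mul_of_nonneg_left (hanti ⟨hs, hsw.trans hwe⟩ ⟨hw0, hwe⟩ hsw) ?_
        exact Real.rpow_nonneg (div_nonneg (by linarith) (by linarith)) γ

theorem norm_inv_mul_clog_cpow_le_on_circle {γ r θ : ℝ} (hγ : 0 < γ) (hr0 : 0 ≤ r) (hr1 : r ≤ 1)
    (hθ : |θ| ≤ π) (hθ0 : θ ≠ 0) :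
    ‖((1 - r * Complex.exp (θ * I)) *
        Complex.log (Real.exp 1 / (1 - r * Complex.exp (θ * I))) ^ (γ : ℂ))⁻¹‖ ≤
      ((γ + 1 - Real.log 2) / (1 - Real.log 2)) ^ γ * logKernel (γ + 1) γ (|θ| / π) := by
  refine norm_inv_mul_clog_cpow_le hγ (Real.log_two_lt_d9.trans (by norm_num)) (by positivity)
    (abs_div_pi_le_norm_one_sub_mul_exp hr0 hθ) ?_
  calc ‖1 - r * Complex.exp (θ * I)‖ ≤ ‖(1 : ℂ)‖ + ‖r * Complex.exp (θ * I)‖ := norm_sub_le _ _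
    _ ≤ 2 := by simp [abs_of_nonneg hr0]; linarith

theorem intervalIntegrable_logKernel_abs_div_pi {c γ : ℝ} (hγ : 1 < γ) (hc : 0 < c) :
    IntervalIntegrable (fun θ => logKernel c γ (|θ| / π)) volume (-π) π := by
  have h := ((intervalIntegrable_iff_integrableOn_Ioc_of_le zero_le_one).2
    (integrableOn_logKernel hγ (by simpa using hc))).comp_mul_right (c := π⁻¹)
  simp only [zero_div, one_div, inv_inv, ← div_eq_mul_inv] at h
  exact h.comp_abs pi_pos.le

theorem stmt16_general (γ : ℝ) (hγ1 : 1 < γ)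
    (f : ℂ → ℂ)
    (hf : ∀ z ∈ Metric.ball (0:ℂ) 1,
      f z = ((1 - z) * (Complex.log ((Real.exp 1 : ℂ) / (1 - z))) ^ (γ : ℂ))⁻¹) :
    ∃ M : ℝ, ∀ r : ℝ, 0 ≤ r → r < 1 →
      (1 / (2 * π)) * (∫ θ in (0:ℝ)..(2 * π),
        ‖f ((r : ℂ) * Complex.exp (θ * Complex.I))‖) ≤ M := by
  set G : ℝ → ℝ := fun θ =>
    ((γ + 1 - Real.log 2) / (1 - Real.log 2)) ^ γ * logKernel (γ + 1) γ (|θ| / π)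
  have hG : IntervalIntegrable G volume (-π) π :=
    (intervalIntegrable_logKernel_abs_div_pi hγ1 (by linarith)).const_mul _
  refine ⟨1 / (2 * π) * ∫ θ in -π..π, G θ, fun r hr0 hr1 => ?_⟩
  have hper : Function.Periodic (fun θ : ℝ => ‖f (r * Complex.exp (θ * I))‖) (2 * π) := by
    intro θ
    simp [add_mul, Complex.exp_add]
  gcongr 1 / (2 * π) * ?_
  rw [← zero_add (2 * π), hper.intervalIntegral_add_eq 0 (-π), show -π + 2 * π = π by ring,
    intervalIntegral.integral_of_le (by linarith [pi_pos]),
    intervalIntegral.integral_of_le (by linarith [pi_pos])]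
  refine integral_mono_of_nonneg (ae_of_all _ fun _ => norm_nonneg _) hG.1 ?_
  filter_upwards [ae_restrict_mem measurableSet_Ioc, (volume.restrict _).ae_ne 0] with θ hθ hθ0
  have hz : (r : ℂ) * Complex.exp (θ * I) ∈ Metric.ball (0 : ℂ) 1 := by
    simpa [abs_of_nonneg hr0] using hr1
  rw [hf _ hz]
  exact norm_inv_mul_clog_cpow_le_on_circle (by linarith) hr0 hr1.le
    (abs_le.2 ⟨hθ.1.le, hθ.2⟩) hθ0

/-- for `α > 0` and `γ ∈ (1, α+1)`, the function
`φ'(z) = 1/((1-z) log^γ(e/(1-z)))` belongs to the Hardy space `H¹`. -/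
theorem stmt16 (α γ : ℝ) (hα : 0 < α) (hγ1 : 1 < γ) (hγ2 : γ < α + 1)
    (f : ℂ → ℂ)
    (hf : ∀ z ∈ Metric.ball (0:ℂ) 1,
      f z = ((1 - z) * (Complex.log ((Real.exp 1 : ℂ) / (1 - z))) ^ (γ : ℂ))⁻¹) :
    ∃ M : ℝ, ∀ r : ℝ, 0 ≤ r → r < 1 →
      (1 / (2 * π)) * (∫ θ in (0:ℝ)..(2 * π),
        ‖f ((r : ℂ) * Complex.exp (θ * Complex.I))‖) ≤ M :=
  stmt16_general γ hγ1 f hf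
end

section
/- Let $\alpha, \beta > 0$ and let $F(n) = \int_0^\infty \exp\big(-(n+1)x - \frac{\alpha}{x^\beta}\big)\,dx$. Then, with $x_n = \big(\frac{\alpha\beta}{n+1}\big)^{1/(1+\beta)}$ the minimizer of $x \mapsto (n+1)x + \alpha x^{-\beta}$, one has $F(n) = x_n e^{-(n+1)x_n - \alpha x_n^{-\beta}} \int_{-1}^\infty \exp\big(-\frac{\alpha}{x_n^\beta} h(u)\big) du$ with $h(u) = \beta u + (1+u)^{-\beta} - 1$, and $\sqrt{\frac{t\, h''(0)}{2\pi}} \int_{-1}^\infty e^{-t h(u)}\,du \to 1$ as $t \to \infty$. -/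
open MeasureTheory Real Filter Topology Set



noncomputable def myH (β : ℝ) : ℝ → ℝ := fun u => β * u + (1 + u) ^ (-β) - 1
noncomputable def myH1 (β : ℝ) : ℝ → ℝ := fun u => β - β * (1 + u) ^ (-β - 1)
noncomputable def myH2 (β : ℝ) : ℝ → ℝ := fun u => β * (β + 1) * (1 + u) ^ (-β - 2)

lemma myH_deriv (β : ℝ) {u : ℝ} (hu : -1 < u) : HasDerivAt (myH β) (myH1 β u) u := by
  have hp : (0:ℝ) < 1 + u := by linarith
  have hu1 : HasDerivAt (fun v : ℝ => 1 + v) 1 u := (hasDerivAt_id u).const_add 1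
  have A : HasDerivAt (fun v : ℝ => (1 + v) ^ (-β)) ((-β) * (1 + u) ^ (-β - 1)) u := by
    have B := (Real.hasDerivAt_rpow_const (x := 1 + u) (p := -β) (Or.inl hp.ne'))
    exact (B.comp u hu1).congr_deriv (by ring)
  have C : HasDerivAt (fun v : ℝ => β * v + (1 + v) ^ (-β) - 1)
      (β * 1 + (-β) * (1 + u) ^ (-β - 1)) u :=
    (((hasDerivAt_id u).const_mul β).add A).sub_const 1
  convert C using 1
  · rfl
  · unfold myH1; ring

lemma myH1_deriv (β : ℝ) {u : ℝ} (hu : -1 < u) : HasDerivAt (myH1 β) (myH2 β u) u := by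
  have hp : (0:ℝ) < 1 + u := by linarith
  have hu1 : HasDerivAt (fun v : ℝ => 1 + v) 1 u := (hasDerivAt_id u).const_add 1
  have A : HasDerivAt (fun v : ℝ => (1 + v) ^ (-β - 1)) ((-β - 1) * (1 + u) ^ (-β - 1 - 1)) u := by
    have B := (Real.hasDerivAt_rpow_const (x := 1 + u) (p := -β - 1) (Or.inl hp.ne'))
    exact (B.comp u hu1).congr_deriv (by ring)
  have C : HasDerivAt (fun v : ℝ => β - β * (1 + v) ^ (-β - 1))
      (-(β * ((-β - 1) * (1 + u) ^ (-β - 1 - 1)))) u := (A.const_mul β).const_sub β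
  convert C using 1
  · rfl
  · unfold myH2
    have : -β - 1 - 1 = -β - 2 := by ring
    rw [this]; ring

lemma myH_zero (β : ℝ) : myH β 0 = 0 := by simp [myH]
lemma myH1_zero (β : ℝ) : myH1 β 0 = 0 := by simp [myH1]

lemma myH_measurable (β : ℝ) : Measurable (myH β) := by
  unfold myH
  fun_prop
lemma le_of_deriv_nonneg' {f f' : ℝ → ℝ} {a b : ℝ} (hab : a ≤ b)
    (hd : ∀ x ∈ Set.Icc a b, HasDerivAt f (f' x) x)
    (h0 : ∀ x ∈ Set.Icc a b, 0 ≤ f' x) : f a ≤ f b := by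
  have hmono : MonotoneOn f (Set.Icc a b) := by
    apply monotoneOn_of_deriv_nonneg (convex_Icc a b)
    · exact fun x hx => (hd x hx).continuousAt.continuousWithinAt
    · intro x hx
      rw [interior_Icc] at hx
      exact ((hd x (Ioo_subset_Icc_self hx)).differentiableAt).differentiableWithinAt
    · intro x hx
      rw [interior_Icc] at hx
      rw [(hd x (Ioo_subset_Icc_self hx)).deriv]
      exact h0 x (Ioo_subset_Icc_self hx)
  exact hmono ⟨le_rfl, hab⟩ ⟨hab, le_rfl⟩ hab
-- generic second-order nonnegativity
lemma nonneg_of_deriv2 {g g' g'' : ℝ → ℝ} {u : ℝ} (hu : -1 < u)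
    (hd : ∀ x, -1 < x → HasDerivAt g (g' x) x)
    (hd' : ∀ x, -1 < x → HasDerivAt g' (g'' x) x)
    (hg0 : g 0 = 0) (hg0' : g' 0 = 0)
    (hk : ∀ x, min u 0 ≤ x → x ≤ max u 0 → 0 ≤ g'' x) : 0 ≤ g u := by
  rcases le_or_gt 0 u with hcase | hcase
  · have hmin : min u 0 = 0 := min_eq_right hcase
    have hmax : max u 0 = u := max_eq_left hcase
    have hstep : ∀ x ∈ Set.Icc 0 u, 0 ≤ g' x := by
      intro x hx
      rw [← hg0']
      apply le_of_deriv_nonneg' hx.1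
      · intro y hy
        exact hd' y (by rcases hy with ⟨hy1, hy2⟩; linarith)
      · intro y hy
        exact hk y (by rw [hmin]; exact hy.1) (by rw [hmax]; exact le_trans hy.2 hx.2)
    rw [← hg0]
    apply le_of_deriv_nonneg' hcase
    · intro y hy; exact hd y (by rcases hy with ⟨hy1, hy2⟩; linarith)
    · exact hstep
  · have hmin : min u 0 = u := min_eq_left hcase.le
    have hmax : max u 0 = 0 := max_eq_right hcase.le
    have hstep : ∀ x ∈ Set.Icc u 0, g' x ≤ 0 := by
      intro x hx
      have hx1 : -1 < x := lt_of_lt_of_le hu hx.1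
      rw [← hg0']
      apply le_of_deriv_nonneg' hx.2
      · intro y hy; exact hd' y (by rcases hy with ⟨hy1, hy2⟩; linarith)
      · intro y hy
        exact hk y (by rw [hmin]; exact le_trans hx.1 hy.1) (by rw [hmax]; exact hy.2)
    have : (fun v => -g v) u ≤ (fun v => -g v) 0 := by
      apply le_of_deriv_nonneg' hcase.le (f' := fun v => -g' v)
      · intro y hy
        exact (hd y (by rcases hy with ⟨hy1, hy2⟩; linarith)).neg
      · intro y hy; simpa using hstep y hy
    simp only [hg0, neg_zero] at this
    simpa using this

lemma sq_hasDeriv (k v : ℝ) : HasDerivAt (fun w : ℝ => k * w ^ 2) (2 * k * v) v := by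
  have := (hasDerivAt_pow 2 v).const_mul k
  exact this.congr_deriv (by simp; ring)

lemma myH_lower (β k : ℝ) {u : ℝ} (hu : -1 < u)
    (hk : ∀ x, min u 0 ≤ x → x ≤ max u 0 → 2 * k ≤ myH2 β x) : k * u ^ 2 ≤ myH β u := by
  have H := nonneg_of_deriv2 (g := fun v => myH β v - k * v ^ 2)
      (g' := fun v => myH1 β v - 2 * k * v) (g'' := fun v => myH2 β v - 2 * k) hu
      (fun x hx => (myH_deriv β hx).sub (sq_hasDeriv k x))
      (fun x hx => by
        have := (myH1_deriv β hx).sub (((hasDerivAt_id x).const_mul (2 * k)))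
        exact this.congr_deriv (by ring))
      (by simp [myH_zero]) (by simp [myH1_zero])
      (fun x hx1 hx2 => by show 0 ≤ myH2 β x - 2 * k; linarith [hk x hx1 hx2])
  have : (0:ℝ) ≤ myH β u - k * u ^ 2 := H
  linarith

lemma myH_upper (β k : ℝ) {u : ℝ} (hu : -1 < u)
    (hk : ∀ x, min u 0 ≤ x → x ≤ max u 0 → myH2 β x ≤ 2 * k) : myH β u ≤ k * u ^ 2 := by
  have H := nonneg_of_deriv2 (g := fun v => k * v ^ 2 - myH β v)
      (g' := fun v => 2 * k * v - myH1 β v) (g'' := fun v => 2 * k - myH2 β v) hu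
      (fun x hx => (sq_hasDeriv k x).sub (myH_deriv β hx))
      (fun x hx => by
        have := (((hasDerivAt_id x).const_mul (2 * k))).sub (myH1_deriv β hx)
        exact this.congr_deriv (by ring))
      (by simp [myH_zero]) (by simp [myH1_zero])
      (fun x hx1 hx2 => by show 0 ≤ 2 * k - myH2 β x; linarith [hk x hx1 hx2])
  have : (0:ℝ) ≤ k * u ^ 2 - myH β u := H
  linarith

lemma rpow_neg_antitone {a b p : ℝ} (ha : 0 < a) (hab : a ≤ b) (hp : 0 ≤ p) :
    b ^ (-p) ≤ a ^ (-p) := by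
  rw [Real.rpow_neg ha.le, Real.rpow_neg (by linarith)]
  exact inv_anti₀ (Real.rpow_pos_of_pos ha p) (Real.rpow_le_rpow ha.le hab hp)

lemma myH_tail (β : ℝ) (hβ : 0 < β) :
    ∃ k > 0, ∀ u : ℝ, -1 < u → k * min (u ^ 2) |u| ≤ myH β u := by
  set c := β * (β + 1) / 2 with hc
  have hcpos : 0 < c := by positivity
  set k₁ := c * (2:ℝ) ^ (-β - 2) with hk₁
  have hk₁pos : 0 < k₁ := by
    have := Real.rpow_pos_of_pos (by norm_num : (0:ℝ) < 2) (-β - 2)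
    positivity
  have low1 : ∀ u : ℝ, -1 < u → u ≤ 1 → k₁ * u ^ 2 ≤ myH β u := by
    intro u hu hu1
    apply myH_lower β k₁ hu
    intro y hy1 hy2
    have hy1' : -1 < y := lt_of_lt_of_le (lt_min hu (by norm_num)) hy1
    have hy2' : y ≤ 1 := le_trans hy2 (max_le hu1 (by norm_num))
    have hbase : (2:ℝ) ^ (-(β + 2)) ≤ (1 + y) ^ (-(β + 2)) :=
      rpow_neg_antitone (by linarith) (by linarith) (by linarith)
    have he : -(β + 2) = -β - 2 := by ring
    rw [he] at hbase
    have : β * (β + 1) * ((2:ℝ) ^ (-β - 2)) ≤ β * (β + 1) * ((1 + y) ^ (-β - 2)) :=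
      mul_le_mul_of_nonneg_left hbase (by positivity)
    simp only [myH2]
    calc 2 * k₁ = β * (β + 1) * ((2:ℝ) ^ (-β - 2)) := by rw [hk₁, hc]; ring
    _ ≤ _ := this
  have h1pos : 0 < myH β 1 :=
    lt_of_lt_of_le (by positivity) (low1 1 (by norm_num) le_rfl)
  have h11pos : 0 < myH1 β 1 := by
    have hlt : (2:ℝ) ^ (-β - 1) < 1 :=
      Real.rpow_lt_one_of_one_lt_of_neg (by norm_num) (by linarith)
    have heq : myH1 β 1 = β - β * (2:ℝ) ^ (-β - 1) := by
      simp only [myH1]; norm_num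
    rw [heq]
    nlinarith [hlt, hβ]
  set k₂ := min (myH β 1) (myH1 β 1) with hk₂
  have hk₂pos : 0 < k₂ := lt_min h1pos h11pos
  have low2 : ∀ u : ℝ, 1 ≤ u → k₂ * u ≤ myH β u := by
    intro u hu
    have key : (fun v => myH β v - k₂ * v) 1 ≤ (fun v => myH β v - k₂ * v) u := by
      apply le_of_deriv_nonneg' (f := fun v => myH β v - k₂ * v) (f' := fun v => myH1 β v - k₂) hu
      · intro y hy
        have hy1 : -1 < y := by linarith [hy.1]
        have := (myH_deriv β hy1).sub ((hasDerivAt_id y).const_mul k₂)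
        exact this.congr_deriv (by ring)
      · intro y hy
        have hy1 : -1 < y := by linarith [hy.1]
        have mono1 : myH1 β 1 ≤ myH1 β y := by
          apply le_of_deriv_nonneg' (f' := myH2 β) hy.1
          · intro z hz
            exact myH1_deriv β (by linarith [hz.1])
          · intro z hz
            have hz1 : (0:ℝ) < 1 + z := by linarith [hz.1]
            have := Real.rpow_pos_of_pos hz1 (-β - 2)
            simp only [myH2]
            positivity
        show 0 ≤ myH1 β y - k₂
        linarith [min_le_right (myH β 1) (myH1 β 1)]
    have key' : myH β 1 - k₂ * 1 ≤ myH β u - k₂ * u := key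
    have h1 : k₂ ≤ myH β 1 := min_le_left _ _
    linarith
  refine ⟨min k₁ k₂, lt_min hk₁pos hk₂pos, fun u hu => ?_⟩
  rcases le_or_gt u 1 with hle | hgt
  · have habs : |u| ≤ 1 := abs_le.mpr ⟨by linarith, hle⟩
    have hsq : u ^ 2 ≤ |u| := by
      nlinarith [sq_abs u, abs_nonneg u]
    rw [min_eq_left hsq]
    calc min k₁ k₂ * u ^ 2 ≤ k₁ * u ^ 2 :=
          mul_le_mul_of_nonneg_right (min_le_left _ _) (sq_nonneg u)
    _ ≤ myH β u := low1 u hu hle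
  · have habs : |u| = u := abs_of_pos (by linarith)
    have hsq : |u| ≤ u ^ 2 := by rw [habs]; nlinarith
    rw [min_eq_right hsq, habs]
    calc min k₁ k₂ * u ≤ k₂ * u :=
          mul_le_mul_of_nonneg_right (min_le_right _ _) (by linarith)
    _ ≤ myH β u := low2 u hgt.le

lemma rpow_cont_at (q : ℝ) : ContinuousAt (fun u : ℝ => (1 + u) ^ q) 0 := by
  have h1 : ContinuousAt (fun u : ℝ => 1 + u) 0 := by fun_prop
  apply ContinuousAt.rpow_const h1
  left; norm_num

lemma myH_cont (β : ℝ) : ContinuousAt (myH β) 0 := by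
  unfold myH
  exact (((continuousAt_const.mul continuousAt_id).add (rpow_cont_at (-β))).sub continuousAt_const)

lemma myH1_cont (β : ℝ) : ContinuousAt (myH1 β) 0 := by
  unfold myH1
  exact (continuousAt_const.sub (continuousAt_const.mul (rpow_cont_at (-β - 1))))

lemma myH2_cont (β : ℝ) : ContinuousAt (myH2 β) 0 := by
  unfold myH2
  exact continuousAt_const.mul (rpow_cont_at (-β - 2))

lemma ev_near : ∀ᶠ u : ℝ in 𝓝[≠] (0:ℝ), -1 < u := by
  have : Ioo (-1:ℝ) 1 ∈ 𝓝 (0:ℝ) := Ioo_mem_nhds (by norm_num) (by norm_num)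
  filter_upwards [nhdsWithin_le_nhds this] with u hu
  exact hu.1

lemma myH_ratio (β : ℝ) (hβ : 0 < β) :
    Tendsto (fun u => myH β u / u ^ 2) (𝓝[≠] (0:ℝ)) (𝓝 (β * (β + 1) / 2)) := by
  have inner : Tendsto (fun u => myH1 β u / (2 * u)) (𝓝[≠] (0:ℝ)) (𝓝 (β * (β + 1) / 2)) := by
    apply HasDerivAt.lhopital_zero_nhdsNE (f' := myH2 β) (g' := fun _ => (2:ℝ))
    · filter_upwards [ev_near] with u hu; exact myH1_deriv β hu
    · filter_upwards [ev_near] with u _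
      simpa using ((hasDerivAt_id u).const_mul (2:ℝ))
    · filter_upwards [ev_near] with u _; norm_num
    · have := (myH1_cont β).tendsto
      rw [myH1_zero β] at this
      exact this.mono_left nhdsWithin_le_nhds
    · have : Tendsto (fun u : ℝ => 2 * u) (𝓝 (0:ℝ)) (𝓝 (2 * 0)) := (continuous_const.mul continuous_id).tendsto 0
      simpa using this.mono_left nhdsWithin_le_nhds
    · have := (myH2_cont β).tendsto
      have h0 : myH2 β 0 = β * (β + 1) := by simp [myH2]
      rw [h0] at this
      have := this.mono_left (nhdsWithin_le_nhds (s := {(0:ℝ)}ᶜ))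
      have hdiv : Tendsto (fun u : ℝ => myH2 β u / 2) (𝓝[≠] (0:ℝ)) (𝓝 (β * (β + 1) / 2)) :=
        this.div_const 2
      exact hdiv
  apply HasDerivAt.lhopital_zero_nhdsNE (f' := myH1 β) (g' := fun u => 2 * u)
  · filter_upwards [ev_near] with u hu; exact myH_deriv β hu
  · filter_upwards [ev_near] with u _
    simpa using hasDerivAt_pow 2 u
  · filter_upwards [self_mem_nhdsWithin] with u hu
    simpa using hu
  · have := (myH_cont β).tendsto
    rw [myH_zero β] at this
    exact this.mono_left nhdsWithin_le_nhds
  · have : Tendsto (fun u : ℝ => u ^ 2) (𝓝 (0:ℝ)) (𝓝 ((0:ℝ) ^ 2)) := (continuous_pow 2).tendsto 0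
    simpa using this.mono_left nhdsWithin_le_nhds
  · exact inner

lemma integrable_exp_neg_abs {k : ℝ} (hk : 0 < k) :
    Integrable (fun v : ℝ => Real.exp (-(k * |v|))) := by
  have hIoi : IntegrableOn (fun v : ℝ => Real.exp (-(k * |v|))) (Ioi 0) := by
    apply ((exp_neg_integrableOn_Ioi 0 hk).congr_fun ?_ measurableSet_Ioi)
    intro x hx
    show Real.exp (-k * x) = Real.exp (-(k * |x|))
    rw [abs_of_pos hx]
    ring_nf
  have hIic : IntegrableOn (fun v : ℝ => Real.exp (-(k * |v|))) (Iic 0) := by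
    rw [← Measure.map_neg_eq_self (volume : Measure ℝ)]
    have m : MeasurableEmbedding fun x : ℝ => -x := (Homeomorph.neg ℝ).measurableEmbedding
    rw [m.integrableOn_map_iff]
    simp_rw [Function.comp_def, abs_neg, neg_preimage, neg_Iic, neg_zero]
    exact Iff.mpr integrableOn_Ici_iff_integrableOn_Ioi hIoi
  have := hIic.union hIoi
  rwa [Iic_union_Ioi, integrableOn_univ] at this

lemma integral_Ioi_add_right (f : ℝ → ℝ) (c d : ℝ) :
    ∫ x in Ioi c, f (x + d) = ∫ x in Ioi (c + d), f x := by
  have A : MeasurableEmbedding fun x : ℝ => x + d :=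
    (Homeomorph.addRight d).isClosedEmbedding.measurableEmbedding
  have B := MeasurableEmbedding.setIntegral_map (μ := volume) A f (Ioi (c + d))
  rw [map_add_right_eq_self (volume : Measure ℝ) d] at B
  have hpre : (fun x : ℝ => x + d) ⁻¹' Ioi (c + d) = Ioi c := by
    ext y; simp only [mem_preimage, mem_Ioi]
    constructor <;> intro <;> linarith
  rw [hpre] at B
  exact B.symm

lemma pointwise_lim (β : ℝ) (hβ : 0 < β) (v : ℝ) :
    Tendsto (fun t : ℝ => t * myH β ((Real.sqrt t)⁻¹ * v)) atTop
      (𝓝 (β * (β + 1) / 2 * v ^ 2)) := by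
  rcases eq_or_ne v 0 with rfl | hv
  · have : ∀ t : ℝ, t * myH β ((Real.sqrt t)⁻¹ * 0) = 0 := by
      intro t; rw [mul_zero, myH_zero, mul_zero]
    simp only [this]
    simpa using tendsto_const_nhds
  · have hu : Tendsto (fun t : ℝ => (Real.sqrt t)⁻¹ * v) atTop (𝓝[≠] (0:ℝ)) := by
      rw [tendsto_nhdsWithin_iff]
      constructor
      · have h1 : Tendsto (fun t : ℝ => (Real.sqrt t)⁻¹) atTop (𝓝 0) :=
          (tendsto_rpow_neg_atTop (by norm_num : (0:ℝ) < 1/2)).congr' ?_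
        · simpa using h1.mul_const v
        · filter_upwards [eventually_gt_atTop (0:ℝ)] with t ht
          rw [Real.rpow_neg ht.le, Real.sqrt_eq_rpow]
      · filter_upwards [eventually_gt_atTop (0:ℝ)] with t ht
        have : Real.sqrt t ≠ 0 := ne_of_gt (Real.sqrt_pos.mpr ht)
        simp [this, hv]
    have hratio : Tendsto (fun t : ℝ => myH β ((Real.sqrt t)⁻¹ * v) / ((Real.sqrt t)⁻¹ * v) ^ 2)
        atTop (𝓝 (β * (β + 1) / 2)) := (myH_ratio β hβ).comp hu
    have h2 := hratio.const_mul (v ^ 2)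
    rw [show v ^ 2 * (β * (β + 1) / 2) = β * (β + 1) / 2 * v ^ 2 from by ring] at h2
    apply h2.congr'
    filter_upwards [eventually_gt_atTop (0:ℝ)] with t ht
    have hst : Real.sqrt t ≠ 0 := ne_of_gt (Real.sqrt_pos.mpr ht)
    have hsq : (Real.sqrt t)⁻¹ ^ 2 = t⁻¹ := by
      rw [← Real.sqrt_inv]
      exact Real.sq_sqrt (by positivity)
    field_simp
    rw [Real.sq_sqrt ht.le]; ring

lemma laplace_main (β : ℝ) (hβ : 0 < β) :
    Tendsto (fun t : ℝ => Real.sqrt (t * (β * (β + 1)) / (2 * π)) *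
        ∫ u in Ioi (-1:ℝ), Real.exp (-t * myH β u)) atTop (𝓝 1) := by
  obtain ⟨k, hk, hbound⟩ := myH_tail β hβ
  set c := β * (β + 1) / 2 with hc
  have hcpos : 0 < c := by positivity
  set J : ℝ → ℝ → ℝ := fun t v => (Ioi (-Real.sqrt t)).indicator
      (fun w => Real.exp (-t * myH β ((Real.sqrt t)⁻¹ * w))) v with hJ
  have hDCT : Tendsto (fun t => ∫ v, J t v) atTop (𝓝 (∫ v, Real.exp (-c * v ^ 2))) := by
    apply tendsto_integral_filter_of_dominated_convergence
        (bound := fun v => Real.exp k * Real.exp (-(k * |v|)))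
    · filter_upwards with t
      have m1 : Measurable fun v : ℝ => (Real.sqrt t)⁻¹ * v := measurable_id.const_mul _
      have m2 : Measurable fun v : ℝ => Real.exp (-t * myH β ((Real.sqrt t)⁻¹ * v)) :=
        Real.measurable_exp.comp (((myH_measurable β).comp m1).const_mul (-t))
      exact (m2.indicator measurableSet_Ioi).aestronglyMeasurable
    · filter_upwards [eventually_ge_atTop (1:ℝ)] with t ht
      apply ae_of_all
      intro v
      by_cases hv : v ∈ Ioi (-Real.sqrt t)
      · rw [hJ]
        simp only [indicator_of_mem hv]
        have htpos : (0:ℝ) < t := by linarith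
        have hst : (1:ℝ) ≤ Real.sqrt t := by
          rw [show (1:ℝ) = Real.sqrt 1 from (Real.sqrt_one).symm]
          exact Real.sqrt_le_sqrt ht
        have hstpos : (0:ℝ) < Real.sqrt t := by linarith
        have hsq : (Real.sqrt t)⁻¹ ^ 2 = t⁻¹ := by
          rw [← Real.sqrt_inv]
          exact Real.sq_sqrt (by positivity)
        set u := (Real.sqrt t)⁻¹ * v with hu
        have hu1 : -1 < u := by
          have h1 : -Real.sqrt t < v := hv
          have := mul_lt_mul_of_pos_left h1 (inv_pos.mpr hstpos)
          calc (-1:ℝ) = (Real.sqrt t)⁻¹ * (-Real.sqrt t) := by field_simp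
          _ < u := this
        have husq : u ^ 2 = v ^ 2 / t := by
          rw [hu, mul_pow, hsq]; ring
        have habs : |u| = |v| / Real.sqrt t := by
          rw [hu, abs_mul, abs_of_pos (inv_pos.mpr hstpos)]; ring
        have hsl : Real.sqrt t ≤ t := by
          nlinarith [Real.sq_sqrt htpos.le]
        have hminle : min (v ^ 2) |v| / t ≤ min (u ^ 2) |u| := by
          apply le_min
          · rw [husq]
            exact (div_le_div_iff_of_pos_right htpos).mpr (min_le_left _ _)
          · rw [habs]
            calc min (v ^ 2) |v| / t ≤ |v| / t := by
                  exact (div_le_div_iff_of_pos_right htpos).mpr (min_le_right _ _)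
            _ ≤ |v| / Real.sqrt t := by
                  apply div_le_div_of_nonneg_left (abs_nonneg v) hstpos hsl
        have hHlow := hbound u hu1
        have h1 : k * min (v ^ 2) |v| ≤ t * myH β u := by
          have h2 : k * (min (v ^ 2) |v| / t) ≤ k * min (u ^ 2) |u| :=
            mul_le_mul_of_nonneg_left hminle hk.le
          calc k * min (v ^ 2) |v| = t * (k * (min (v ^ 2) |v| / t)) := by field_simp
          _ ≤ t * (k * min (u ^ 2) |u|) := mul_le_mul_of_nonneg_left h2 htpos.le
          _ ≤ t * myH β u := mul_le_mul_of_nonneg_left hHlow htpos.le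
        have hmin1 : |v| - 1 ≤ min (v ^ 2) |v| := by
          rcases le_or_gt (|v|) 1 with hcase | hcase
          · have := le_min (sq_nonneg v) (abs_nonneg v)
            linarith
          · have hle : |v| ≤ v ^ 2 := by nlinarith [sq_abs v]
            rw [min_eq_right hle]
            linarith
        rw [Real.norm_eq_abs, Real.abs_exp, ← Real.exp_add]
        apply Real.exp_le_exp.mpr
        have h3 : k * (|v| - 1) ≤ k * min (v ^ 2) |v| := mul_le_mul_of_nonneg_left hmin1 hk.le
        nlinarith
      · rw [hJ]
        simp only [indicator_of_notMem hv]
        have : (0:ℝ) < Real.exp k * Real.exp (-(k * |v|)) := by positivity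
        simp
        positivity
    · exact (integrable_exp_neg_abs hk).const_mul (Real.exp k)
    · apply ae_of_all
      intro v
      have hlim := pointwise_lim β hβ v
      have hexp : Tendsto (fun t : ℝ => Real.exp (-(t * myH β ((Real.sqrt t)⁻¹ * v)))) atTop
          (𝓝 (Real.exp (-(c * v ^ 2)))) := (Real.continuous_exp.tendsto _).comp hlim.neg
      rw [show -(c * v ^ 2) = -c * v ^ 2 from (neg_mul c _).symm] at hexp
      apply hexp.congr'
      filter_upwards [eventually_gt_atTop (v ^ 2), eventually_gt_atTop (0:ℝ)] with t ht1 ht2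
      have habs : |v| < Real.sqrt t := by
        rw [show |v| = Real.sqrt (v ^ 2) from (Real.sqrt_sq_eq_abs v).symm]
        exact Real.sqrt_lt_sqrt (sq_nonneg v) ht1
      have hv : v ∈ Ioi (-Real.sqrt t) := by
        simp only [mem_Ioi]
        have := neg_abs_le v
        linarith
      rw [hJ]
      simp only [indicator_of_mem hv]
      rw [neg_mul]
  have hgauss : ∫ v : ℝ, Real.exp (-c * v ^ 2) = Real.sqrt (π / c) := integral_gaussian c
  have hrel : ∀ᶠ t in atTop,
      (∫ v, J t v) = Real.sqrt t * ∫ u in Ioi (-1:ℝ), Real.exp (-t * myH β u) := by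
    filter_upwards [eventually_gt_atTop (0:ℝ)] with t ht
    have hstpos : (0:ℝ) < Real.sqrt t := Real.sqrt_pos.mpr ht
    have hsub := integral_comp_mul_left_Ioi (fun u => Real.exp (-t * myH β u)) (-Real.sqrt t)
      (inv_pos.mpr hstpos)
    rw [inv_inv] at hsub
    have harg : (Real.sqrt t)⁻¹ * -Real.sqrt t = -1 := by field_simp
    rw [harg] at hsub
    rw [hJ]
    rw [← integral_indicator measurableSet_Ioi] at hsub
    rw [hsub, smul_eq_mul]
  have key : Tendsto (fun t => Real.sqrt t * ∫ u in Ioi (-1:ℝ), Real.exp (-t * myH β u))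
      atTop (𝓝 (Real.sqrt (π / c))) := by
    rw [← hgauss]
    exact hDCT.congr' hrel
  have hone : Real.sqrt (β * (β + 1) / (2 * π)) * Real.sqrt (π / c) = 1 := by
    rw [← Real.sqrt_mul (by positivity : (0:ℝ) ≤ β * (β + 1) / (2 * π))]
    rw [show β * (β + 1) / (2 * π) * (π / c) = 1 from by
      rw [hc]; field_simp]
    exact Real.sqrt_one
  have hfin := key.const_mul (Real.sqrt (β * (β + 1) / (2 * π)))
  rw [hone] at hfin
  apply hfin.congr'
  filter_upwards [eventually_ge_atTop (0:ℝ)] with t ht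
  rw [show t * (β * (β + 1)) / (2 * π) = t * (β * (β + 1) / (2 * π)) from by ring,
    Real.sqrt_mul ht]
  ring

lemma part1 (α β s a : ℝ) (hα : 0 < α) (hβ : 0 < β) (ha : 0 < a) (hs : 0 < s)
    (hkey : s * a = α * β / a ^ β) :
    (∫ x in Ioi (0:ℝ), Real.exp (-s * x - α / x ^ β)) =
      a * Real.exp (-s * a - α / a ^ β) *
        ∫ u in Ioi (-1:ℝ), Real.exp (-(α / a ^ β) * myH β u) := by
  have hshift := integral_Ioi_add_right (fun y => Real.exp (-s * y - α / y ^ β)) (-a) a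
  rw [neg_add_cancel] at hshift
  have hscale := integral_comp_mul_left_Ioi
      (fun y => Real.exp (-s * (y + a) - α / (y + a) ^ β)) (-1) ha
  rw [show a * -1 = -a from by ring, smul_eq_mul] at hscale
  have hcongr : ∀ u ∈ Ioi (-1:ℝ),
      Real.exp (-s * (a * u + a) - α / (a * u + a) ^ β) =
        Real.exp (-s * a - α / a ^ β) * Real.exp (-(α / a ^ β) * myH β u) := by
    intro u hu
    have h1u : (0:ℝ) < 1 + u := by have : -1 < u := hu; linarith
    have hne1 : (1 + u) ^ β ≠ 0 := ne_of_gt (Real.rpow_pos_of_pos h1u β)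
    have hne2 : a ^ β ≠ 0 := ne_of_gt (Real.rpow_pos_of_pos ha β)
    have h2 : α / (a * u + a) ^ β = α / a ^ β * (1 + u) ^ (-β) := by
      rw [show a * u + a = a * (1 + u) from by ring,
        Real.mul_rpow ha.le h1u.le, Real.rpow_neg h1u.le]
      field_simp
    rw [← Real.exp_add]
    congr 1
    rw [h2]
    simp only [myH]
    linear_combination (-u) * hkey
  rw [setIntegral_congr_fun measurableSet_Ioi hcongr] at hscale
  rw [integral_const_mul] at hscale
  beta_reduce at hscale
  calc (∫ x in Ioi (0:ℝ), Real.exp (-s * x - α / x ^ β))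
      = ∫ y in Ioi (-a), Real.exp (-s * (y + a) - α / (y + a) ^ β) := hshift.symm
    _ = a * (a⁻¹ * ∫ y in Ioi (-a), Real.exp (-s * (y + a) - α / (y + a) ^ β)) := by
        field_simp
    _ = a * (Real.exp (-s * a - α / a ^ β) *
          ∫ u in Ioi (-1:ℝ), Real.exp (-(α / a ^ β) * myH β u)) := by
        rw [← hscale]
    _ = _ := by ring


/-- Laplace-method asymptotics for
`F(n) = ∫₀^∞ exp(-(n+1)x - α/x^β) dx`. With `x_n = (αβ/(n+1))^{1/(1+β)}` the
minimizer and `h(u) = βu + (1+u)^{-β} - 1` (so `h''(0) = β(β+1)`), one has the exact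
identity `F(n) = x_n e^{-(n+1)x_n - α x_n^{-β}} ∫_{-1}^∞ exp(-(α/x_n^β) h(u)) du`,
and `√(t h''(0)/(2π)) ∫_{-1}^∞ e^{-t h(u)} du → 1` as `t → ∞`. -/
theorem stmt19 (α β : ℝ) (hα : 0 < α) (hβ : 0 < β)
    (F : ℕ → ℝ)
    (hF : ∀ n : ℕ, F n = ∫ x in Set.Ioi (0:ℝ),
      Real.exp (-((n : ℝ) + 1) * x - α / x ^ β))
    (x : ℕ → ℝ) (hx : ∀ n : ℕ, x n = (α * β / ((n : ℝ) + 1)) ^ (1 / (1 + β)))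
    (h : ℝ → ℝ) (hh : ∀ u : ℝ, h u = β * u + (1 + u) ^ (-β) - 1) :
    (∀ n : ℕ, F n =
      x n * Real.exp (-((n : ℝ) + 1) * x n - α / x n ^ β) *
        ∫ u in Set.Ioi (-1:ℝ), Real.exp (-(α / x n ^ β) * h u)) ∧
    Tendsto (fun t : ℝ =>
        Real.sqrt (t * (β * (β + 1)) / (2 * π)) *
          ∫ u in Set.Ioi (-1:ℝ), Real.exp (-t * h u))
      atTop (𝓝 1) := by
  have hfun : h = myH β := funext hh
  subst hfun
  constructor
  · intro n
    have hs : (0:ℝ) < (n : ℝ) + 1 := by positivity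
    have ha : 0 < x n := by
      rw [hx n]
      exact Real.rpow_pos_of_pos (by positivity) _
    have hkey : ((n : ℝ) + 1) * x n = α * β / x n ^ β := by
      have hz : (0:ℝ) < α * β / ((n : ℝ) + 1) := by positivity
      have h1β : (1:ℝ) + β ≠ 0 := by positivity
      have hpow : x n ^ ((1:ℝ) + β) = α * β / ((n : ℝ) + 1) := by
        rw [hx n, ← Real.rpow_mul hz.le, one_div_mul_cancel h1β, Real.rpow_one]
      have hsplit : x n ^ ((1:ℝ) + β) = x n * x n ^ β := by
        rw [Real.rpow_add ha, Real.rpow_one]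
      have hbne : x n ^ β ≠ 0 := ne_of_gt (Real.rpow_pos_of_pos ha β)
      rw [hsplit] at hpow
      field_simp at hpow ⊢
      linear_combination hpow
    rw [hF n]
    exact part1 α β ((n : ℝ) + 1) (x n) hα hβ ha hs hkey
  · exact laplace_main β hβ
end
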